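/- arXiv:2505.05012 — 7 statements merged into one kernel-verified Lean document; each statement's English description precedes it below -/
import Mathlib

section
/- Let E be a finite-dimensional real inner product space, let f : E → ℝ, and let x ∈ E with x ≠ 0. Write x̂ = ‖x‖⁻¹ • x and suppose f is differentiable at x̂. Define g : E → ℝ by g(ξ) = ‖ξ‖ · f(‖ξ‖⁻¹ • ξ). Then g is differentiable at x and gradient g x = gradient f x̂ + (f x̂ − ⟪gradient f x̂, x̂⟫) • x̂. -/
/-!
With `x̂ = ‖x‖⁻¹ • x`, the norm has derivative `⟪x̂, ·⟫` at `x ≠ 0` and the normalization map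
`ξ ↦ ‖ξ‖⁻¹ • ξ` has derivative `v ↦ ‖x‖⁻¹ • (v - ⟪x̂, v⟫ • x̂)`, i.e. `‖x‖⁻¹` times the orthogonal
projection onto `x̂ᗮ`. The product and chain rules then give
`dg(v) = ⟪x̂, v⟫ f(x̂) + ⟪∇f(x̂), v - ⟪x̂, v⟫ • x̂⟫`, which is the claimed gradient.
-/

open RealInnerProductSpace

section Normalize

variable {E : Type*} [NormedAddCommGroup E] [InnerProductSpace ℝ E] {x : E}

theorem hasFDerivAt_norm_of_ne_zero (hx : x ≠ 0) :
    HasFDerivAt (‖·‖) (innerSL ℝ (NormedSpace.normalize x)) x := by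
  have h := (hasStrictFDerivAt_norm_sq x).hasFDerivAt.sqrt
    (pow_ne_zero 2 (norm_ne_zero_iff.mpr hx))
  simp only [Real.sqrt_sq (norm_nonneg _)] at h
  refine h.congr_fderiv ?_
  ext v
  simp only [NormedSpace.normalize, one_div, mul_inv_rev, smul_apply,
    coe_innerSL_apply, nsmul_eq_mul, Nat.cast_ofNat, smul_eq_mul, map_smul]
  field_simp

theorem hasFDerivAt_normalize (hx : x ≠ 0) :
    HasFDerivAt NormedSpace.normalize
      (‖x‖⁻¹ • (ContinuousLinearMap.id ℝ E -
        (innerSL ℝ (NormedSpace.normalize x)).smulRight (NormedSpace.normalize x))) x := by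
  have h := ((hasDerivAt_inv (norm_ne_zero_iff.mpr hx)).comp_hasFDerivAt x
    (hasFDerivAt_norm_of_ne_zero hx)).smul (hasFDerivAt_id x)
  refine h.congr_fderiv ?_
  ext v
  simp only [NormedSpace.normalize, Function.comp_apply, map_smul, smul_smul, neg_mul, neg_smul,
    id_eq, add_apply, smul_apply, ContinuousLinearMap.id_apply,
    ContinuousLinearMap.smulRight_apply, neg_apply, coe_innerSL_apply,
    smul_eq_mul, sub_eq_add_neg, smul_add, smul_neg, add_right_inj, neg_inj]
  congr 1
  ring

theorem HasGradientAt.norm_mul_comp_normalize [CompleteSpace E] {f : E → ℝ} {a : E}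
    (hx : x ≠ 0) (hf : HasGradientAt f a (NormedSpace.normalize x)) :
    HasGradientAt (fun ξ => ‖ξ‖ * f (NormedSpace.normalize ξ))
      (a + (f (NormedSpace.normalize x) - ⟪a, NormedSpace.normalize x⟫) •
        NormedSpace.normalize x) x := by
  rw [hasGradientAt_iff_hasFDerivAt] at hf ⊢
  refine ((hasFDerivAt_norm_of_ne_zero hx).mul
    (hf.comp x (hasFDerivAt_normalize hx))).congr_fderiv ?_
  ext v
  simp only [ContinuousLinearMap.comp_smulₛₗ, map_inv₀, Real.ringHom_apply,
    ContinuousLinearMap.comp_sub, ContinuousLinearMap.comp_id, Function.comp_apply,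
    add_apply, smul_apply, sub_apply,
    InnerProductSpace.toDual_apply_apply, ContinuousLinearMap.comp_apply,
    ContinuousLinearMap.smulRight_apply, coe_innerSL_apply, map_smul, smul_eq_mul, map_add]
  rw [mul_inv_cancel_left₀ (norm_ne_zero_iff.mpr hx)]
  ring

end Normalize

/-- For a function `f` differentiable at `x̂ = ‖x‖⁻¹ • x`, the positively 1-homogeneous
extension `g ξ = ‖ξ‖ * f (‖ξ‖⁻¹ • ξ)` is differentiable at `x ≠ 0` and its gradient is
`∇f(x̂) + (f(x̂) − ⟪∇f(x̂), x̂⟫) • x̂`. -/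
theorem gradient_homogeneous_extension
    {E : Type*} [NormedAddCommGroup E] [InnerProductSpace ℝ E] [FiniteDimensional ℝ E]
    (f : E → ℝ) (x : E) (hx : x ≠ 0)
    (hf : DifferentiableAt ℝ f (‖x‖⁻¹ • x)) :
    DifferentiableAt ℝ (fun ξ : E => ‖ξ‖ * f (‖ξ‖⁻¹ • ξ)) x ∧
      gradient (fun ξ : E => ‖ξ‖ * f (‖ξ‖⁻¹ • ξ)) x =
        gradient f (‖x‖⁻¹ • x) +
          (f (‖x‖⁻¹ • x) - ⟪gradient f (‖x‖⁻¹ • x), ‖x‖⁻¹ • x⟫) • (‖x‖⁻¹ • x) := by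
  have h := hf.hasGradientAt.norm_mul_comp_normalize hx
  exact ⟨h.differentiableAt, h.gradient⟩
end

section
/- Given piecewise-linear cone data (ι, σ, m, φ), for Lebesgue-almost every y ∈ E the function φ is differentiable at y and gradient φ y ∈ {m i : y ∈ σ i}. -/
/-! The frontier of a convex set is Lebesgue-null, so almost every point lies in the interior
of some cone `σ i`, and near such a point `φ` is the linear map `⟪m i, ·⟫`. -/

open RealInnerProductSpace MeasureTheory Set

theorem ae_exists_mem_interior_of_iUnion_eq_univ {E ι : Type*} [NormedAddCommGroup E]
    [NormedSpace ℝ E] [MeasurableSpace E] [BorelSpace E] [FiniteDimensional ℝ E]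
    (μ : Measure E) [μ.IsAddHaarMeasure] [Countable ι] {s : ι → Set E}
    (hconv : ∀ i, Convex ℝ (s i)) (hcover : ⋃ i, s i = univ) :
    ∀ᵐ y ∂μ, ∃ i, y ∈ interior (s i) := by
  have hfrontier : ∀ᵐ y ∂μ, ∀ i, y ∉ frontier (s i) :=
    ae_all_iff.2 fun i => measure_eq_zero_iff_ae_notMem.1 ((hconv i).addHaar_frontier μ)
  filter_upwards [hfrontier] with y hy
  obtain ⟨i, hyi⟩ := mem_iUnion.1 (hcover ▸ mem_univ y)
  exact ⟨i, not_not.1 fun hint => hy i ⟨subset_closure hyi, hint⟩⟩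

theorem hasGradientAt_of_eqOn_inner {F : Type*} [NormedAddCommGroup F] [InnerProductSpace ℝ F]
    [CompleteSpace F] {f : F → ℝ} {s : Set F} {a y : F}
    (hf : EqOn f (fun x => ⟪a, x⟫) s) (hy : y ∈ interior s) : HasGradientAt f a y :=
  hasGradientAt_iff_hasFDerivAt.2 <|
    (InnerProductSpace.toDual ℝ F a).hasFDerivAt.congr_of_eventuallyEq <|
      Filter.eventuallyEq_of_mem (isOpen_interior.mem_nhds hy) fun _ hx => hf (interior_subset hx)

theorem support_function_ae_gradient_general
    (n : ℕ)
    (ι : Type*) [Fintype ι]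
    (σ : ι → Set (EuclideanSpace ℝ (Fin n)))
    (hσ_convex : ∀ i, Convex ℝ (σ i))
    (hσ_cover : (⋃ i, σ i) = Set.univ)
    (m : ι → EuclideanSpace ℝ (Fin n))
    (φ : EuclideanSpace ℝ (Fin n) → ℝ)
    (hφ : ∀ i, ∀ x ∈ σ i, φ x = ⟪m i, x⟫) :
    ∀ᵐ y : EuclideanSpace ℝ (Fin n) ∂volume,
      DifferentiableAt ℝ φ y ∧ ∃ i, y ∈ σ i ∧ gradient φ y = m i := by
  filter_upwards [ae_exists_mem_interior_of_iUnion_eq_univ volume hσ_convex hσ_cover]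
    with y ⟨i, hy⟩
  have hgrad := hasGradientAt_of_eqOn_inner (hφ i) hy
  exact ⟨hgrad.differentiableAt, i, interior_subset hy, hgrad.gradient⟩

/-- Given piecewise-linear cone data `(ι, σ, m, φ)`, for Lebesgue-almost every `y` the
function `φ` is differentiable at `y` and `gradient φ y` is one of the `m i` with `y ∈ σ i`. -/
theorem support_function_ae_gradient
    (n : ℕ) (hn : 1 ≤ n)
    (ι : Type*) [Fintype ι] [Nonempty ι]
    (σ : ι → Set (EuclideanSpace ℝ (Fin n)))
    (hσ_closed : ∀ i, IsClosed (σ i))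
    (hσ_convex : ∀ i, Convex ℝ (σ i))
    (hσ_cone : ∀ i, ∀ t : ℝ, 0 ≤ t → ∀ x ∈ σ i, t • x ∈ σ i)
    (hσ_cover : (⋃ i, σ i) = Set.univ)
    (m : ι → EuclideanSpace ℝ (Fin n))
    (φ : EuclideanSpace ℝ (Fin n) → ℝ)
    (hφ_cont : Continuous φ)
    (hφ : ∀ i, ∀ x ∈ σ i, φ x = ⟪m i, x⟫) :
    ∀ᵐ y : EuclideanSpace ℝ (Fin n) ∂volume,
      DifferentiableAt ℝ φ y ∧ ∃ i, y ∈ σ i ∧ gradient φ y = m i :=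
  support_function_ae_gradient_general n ι σ hσ_convex hσ_cover m φ hφ
end

section
/- Let E = EuclideanSpace ℝ (Fin n) with Lebesgue measure, let φ : E → ℝ be Lipschitz, and let η : E → ℝ be smooth with compact support. Then the convolution η ⋆ φ (with (η ⋆ φ)(x) = ∫ η(u) · φ(x − u) du) is differentiable at every x ∈ E, and gradient (η ⋆ φ) x = ∫ η(u) • gradient φ (x − u) du, where by Rademacher's theorem gradient φ is defined Lebesgue-almost everywhere (and the integrand may take the junk value of gradient at the remaining null set of points without affecting the integral). -/
open MeasureTheory Filter Topology Convolution

/-- Differentiation under the integral for the mollification of a Lipschitz function: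
if `φ : ℝⁿ → ℝ` is Lipschitz and `η` is smooth with compact support, then
`(η ⋆ φ)(x) = ∫ η(u) φ(x − u) du` is differentiable everywhere and
`gradient (η ⋆ φ) x = ∫ η(u) • gradient φ (x − u) du` (with `gradient φ` defined
Lebesgue-a.e. by Rademacher's theorem, taking junk values on the remaining null set). -/
theorem gradient_convolution_lipschitz
    (n : ℕ)
    (φ : EuclideanSpace ℝ (Fin n) → ℝ) (K : NNReal) (hφ : LipschitzWith K φ)
    (η : EuclideanSpace ℝ (Fin n) → ℝ)
    (hη_smooth : ContDiff ℝ (⊤ : ℕ∞) η) (hη_supp : HasCompactSupport η) :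
    ∀ x : EuclideanSpace ℝ (Fin n),
      DifferentiableAt ℝ (fun y => ∫ u, η u * φ (y - u) ∂volume) x ∧
        gradient (fun y => ∫ u, η u * φ (y - u) ∂volume) x =
          ∫ u, η u • gradient φ (x - u) ∂volume := by
  intro x
  set f : EuclideanSpace ℝ (Fin n) → ℝ := fun y => ∫ u, η u * φ (y - u) ∂volume with hf
  have hφc : Continuous φ := hφ.continuous
  have hηc : Continuous η := hη_smooth.continuous
  have hηint : Integrable η volume := hηc.integrable_of_hasCompactSupport hη_supp
  have hφloc : LocallyIntegrable φ (volume : Measure (EuclideanSpace ℝ (Fin n))) :=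
    hφc.locallyIntegrable
  have hη1 : ContDiff ℝ 1 η := hη_smooth.of_le (by simp)
  have hdf : HasFDerivAt f ((fderiv ℝ η ⋆[(ContinuousLinearMap.mul ℝ ℝ).precompL
      (EuclideanSpace ℝ (Fin n)), volume] φ) x) x :=
    hη_supp.hasFDerivAt_convolution_left (ContinuousLinearMap.mul ℝ ℝ) hη1 hφloc x
  refine ⟨hdf.differentiableAt, ?_⟩
  -- integrability of the integrands
  have hInt : ∀ y : EuclideanSpace ℝ (Fin n), Integrable (fun u => η u * φ (y - u)) volume := by
    intro y
    apply Continuous.integrable_of_hasCompactSupport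
    · exact hηc.mul (hφc.comp (continuous_const.sub continuous_id))
    · exact hη_supp.mul_right
  -- measurability of the gradient of φ
  have hgradmeas : Measurable (fun u => gradient φ (x - u)) := by
    have h1 : Measurable (gradient φ) := by
      have := measurable_fderiv (𝕜 := ℝ) (f := φ)
      exact ((InnerProductSpace.toDual ℝ
        (EuclideanSpace ℝ (Fin n))).symm.continuous.measurable).comp this
    exact h1.comp (measurable_const.sub measurable_id)
  have hgradbd : ∀ y, ‖gradient φ y‖ ≤ (K : ℝ) := by
    intro y
    have : ‖fderiv ℝ φ y‖ ≤ (K : ℝ) := norm_fderiv_le_of_lipschitz ℝ hφ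
    simpa [gradient, LinearIsometryEquiv.norm_map] using this
  have hint2 : Integrable (fun u => η u • gradient φ (x - u)) volume := by
    refine Integrable.mono' (g := fun u => ‖η u‖ * (K : ℝ)) (hηint.norm.mul_const _)
      ((hηc.measurable.smul hgradmeas).aestronglyMeasurable) ?_
    filter_upwards with u
    rw [norm_smul]
    exact mul_le_mul_of_nonneg_left (hgradbd _) (norm_nonneg _)
  -- the key directional derivative computation
  have key : ∀ v : EuclideanSpace ℝ (Fin n),
      fderiv ℝ f x v = ∫ u, η u * (fderiv ℝ φ (x - u)) v ∂volume := by
    intro v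
    -- the slope of f along direction v
    have hline : HasDerivAt (fun t : ℝ => f (x + t • v)) (fderiv ℝ f x v) 0 := by
      have hc : HasDerivAt (fun t : ℝ => x + t • v) v 0 := by
        simpa using ((hasDerivAt_id (0 : ℝ)).smul_const v).const_add x
      have h0 : HasFDerivAt f (fderiv ℝ f x) (x + (0 : ℝ) • v) := by
        simpa using hdf.differentiableAt.hasFDerivAt
      simpa [Function.comp_def] using h0.comp_hasDerivAt 0 hc
    have T1 : Tendsto (fun t : ℝ => (f (x + t • v) - f x) / t) (𝓝[≠] (0 : ℝ))
        (𝓝 (fderiv ℝ f x v)) := by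
      have := hasDerivAt_iff_tendsto_slope.mp hline
      refine this.congr fun t => ?_
      simp [slope_def_field]
    -- dominated convergence
    have T2 : Tendsto (fun t : ℝ => ∫ u, η u * ((φ (x + t • v - u) - φ (x - u)) / t) ∂volume)
        (𝓝[≠] (0 : ℝ)) (𝓝 (∫ u, η u * (fderiv ℝ φ (x - u)) v ∂volume)) := by
      have hae : ∀ᵐ u ∂(volume : Measure (EuclideanSpace ℝ (Fin n))),
          DifferentiableAt ℝ φ (x - u) := by
        have h1 : ∀ᵐ y ∂(volume : Measure (EuclideanSpace ℝ (Fin n))),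
            DifferentiableAt ℝ φ y := hφ.ae_differentiableAt
        have hmp : MeasurePreserving (fun u : EuclideanSpace ℝ (Fin n) => x - u) volume volume :=
          Measure.measurePreserving_sub_left volume x
        rw [← hmp.map_eq] at h1
        exact (ae_map_iff hmp.measurable.aemeasurable
          (measurableSet_of_differentiableAt ℝ φ)).mp h1
      refine tendsto_integral_filter_of_dominated_convergence
        (fun u => ‖η u‖ * ((K : ℝ) * ‖v‖)) ?_ ?_ (hηint.norm.mul_const _) ?_
      · filter_upwards with t
        exact (hηc.mul (((hφc.comp (continuous_const.sub continuous_id)).sub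
          (hφc.comp (continuous_const.sub continuous_id))).div_const t)).aestronglyMeasurable
      · filter_upwards [self_mem_nhdsWithin] with t ht
        filter_upwards with u
        have ht0 : t ≠ 0 := ht
        rw [norm_mul]
        refine mul_le_mul_of_nonneg_left ?_ (norm_nonneg _)
        have hd : |φ (x + t • v - u) - φ (x - u)| ≤ (K : ℝ) * (|t| * ‖v‖) := by
          have := hφ.dist_le_mul (x + t • v - u) (x - u)
          rw [Real.dist_eq] at this
          refine this.trans ?_
          have : x + t • v - u - (x - u) = t • v := by abel
          rw [dist_eq_norm, this, norm_smul]
          simp [Real.norm_eq_abs]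
        have : ‖(φ (x + t • v - u) - φ (x - u)) / t‖ =
            |φ (x + t • v - u) - φ (x - u)| / |t| := by
          rw [Real.norm_eq_abs, abs_div]
        rw [this, div_le_iff₀ (abs_pos.mpr ht0)]
        calc |φ (x + t • v - u) - φ (x - u)| ≤ (K : ℝ) * (|t| * ‖v‖) := hd
          _ = (K : ℝ) * ‖v‖ * |t| := by ring
      · filter_upwards [hae] with u hu
        have hder : HasDerivAt (fun t : ℝ => φ (x - u + t • v))
            ((fderiv ℝ φ (x - u)) v) 0 := by
          have hc : HasDerivAt (fun t : ℝ => x - u + t • v) v 0 := by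
            simpa using ((hasDerivAt_id (0 : ℝ)).smul_const v).const_add (x - u)
          have hfd : HasFDerivAt φ (fderiv ℝ φ (x - u)) (x - u) := hu.hasFDerivAt
          have h0 : HasFDerivAt φ (fderiv ℝ φ (x - u)) (x - u + (0 : ℝ) • v) := by
            simpa using hfd
          simpa [Function.comp_def] using h0.comp_hasDerivAt 0 hc
        have := hasDerivAt_iff_tendsto_slope.mp hder
        have T : Tendsto (fun t : ℝ => (φ (x + t • v - u) - φ (x - u)) / t) (𝓝[≠] (0 : ℝ))
            (𝓝 ((fderiv ℝ φ (x - u)) v)) := by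
          refine this.congr fun t => ?_
          have h1 : x - u + t • v = x + t • v - u := by abel
          simp [slope_def_field, h1]
        exact (T.const_mul (η u))
    -- identify the two sequences on t ≠ 0
    have heq : ∀ᶠ t in 𝓝[≠] (0 : ℝ),
        (∫ u, η u * ((φ (x + t • v - u) - φ (x - u)) / t) ∂volume)
          = (f (x + t • v) - f x) / t := by
      filter_upwards [self_mem_nhdsWithin] with t ht
      have ht0 : (t : ℝ) ≠ 0 := ht
      have h1 : ∀ u : EuclideanSpace ℝ (Fin n),
          η u * ((φ (x + t • v - u) - φ (x - u)) / t)
            = (η u * φ (x + t • v - u) - η u * φ (x - u)) / t := fun u => by ring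
      simp only [h1]
      rw [integral_div, integral_sub (hInt (x + t • v)) (hInt x)]
    exact tendsto_nhds_unique T1 (T2.congr' heq)
  -- conclude via Riesz representation
  refine ext_inner_right ℝ fun v => ?_
  have lhs : (inner ℝ (gradient f x) v : ℝ) = fderiv ℝ f x v := by
    simp [gradient, InnerProductSpace.toDual_symm_apply]
  have rhs : (inner ℝ (∫ u, η u • gradient φ (x - u) ∂volume) v : ℝ)
      = ∫ u, η u * (fderiv ℝ φ (x - u)) v ∂volume := by
    rw [real_inner_comm, ← integral_inner hint2]
    congr 1
    ext u
    rw [real_inner_smul_right, real_inner_comm]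
    congr 1
    simp [gradient, InnerProductSpace.toDual_symm_apply]
  rw [lhs, rhs, key]
end

section
/- Let E be a finite-dimensional real inner product space, A ⊆ E a finite set, B ⊆ E a bounded set, and ξ ∈ E with ⟪a, ξ⟫ ≥ 0 for all a ∈ A. Then there exists ε₀ > 0 such that for every ε with 0 < ε < ε₀, the set {u ∈ B : ⟪a, ξ − ε • u⟫ > 0 for all a ∈ A} is equal to the (ε-independent) set {u ∈ B : for every a ∈ A with ⟪a, ξ⟫ = 0 one has ⟪a, u⟫ < 0}. -/
/-! A constraint active at `ξ` (`⟪a, ξ⟫ = 0`) turns, for every `ε > 0`, into `⟪a, u⟫ < 0`.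
A strict constraint (`⟪a, ξ⟫ > 0`) holds on an open half-space around `ξ`, which contains
`ξ - ε • B` for all small `ε` because `B` is bounded; as `A` is finite, one threshold serves
all strict constraints at once. -/

open RealInnerProductSpace Filter Topology

theorem Bornology.IsBounded.eventually_forall_sub_smul_mem {𝕜 E : Type*} [NormedField 𝕜]
    [SeminormedAddCommGroup E] [NormedSpace 𝕜 E] {B U : Set E} (hB : Bornology.IsBounded B)
    {ξ : E} (hU : U ∈ 𝓝 ξ) : ∀ᶠ ε in 𝓝 (0 : 𝕜), ∀ u ∈ B, ξ - ε • u ∈ U := by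
  have hV : (ξ - ·) ⁻¹' U ∈ 𝓝 (0 : E) :=
    (continuous_const.sub continuous_id).continuousAt.preimage_mem_nhds (by simpa using hU)
  filter_upwards [tendsto_smallSets_iff.1
    (NormedSpace.isVonNBounded_of_isBounded 𝕜 hB).tendsto_smallSets_nhds _ hV] with ε hε u hu
  exact hε (Set.smul_mem_smul_set hu)

section

variable {E : Type*} [NormedAddCommGroup E] [InnerProductSpace ℝ E]

theorem Bornology.IsBounded.eventually_forall_inner_sub_smul_pos {B : Set E}
    (hB : Bornology.IsBounded B) {a ξ : E} (ha : 0 < ⟪a, ξ⟫) :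
    ∀ᶠ ε in 𝓝 (0 : ℝ), ∀ u ∈ B, 0 < ⟪a, ξ - ε • u⟫ :=
  hB.eventually_forall_sub_smul_mem (U := {x | 0 < ⟪a, x⟫}) <|
    (isOpen_lt continuous_const (continuous_const.inner continuous_id)).mem_nhds ha

theorem inner_sub_smul_pos_iff_of_inner_eq_zero {a ξ : E} (ha : ⟪a, ξ⟫ = 0) {ε : ℝ}
    (hε : 0 < ε) (u : E) : 0 < ⟪a, ξ - ε • u⟫ ↔ ⟪a, u⟫ < 0 := by
  rw [inner_sub_right, real_inner_smul_right, ha, zero_sub, neg_pos, mul_neg_iff]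
  simp [hε, hε.not_gt]

theorem sep_forall_inner_sub_smul_pos_eq {A B : Set E} {ξ : E} (hξ : ∀ a ∈ A, 0 ≤ ⟪a, ξ⟫)
    {ε : ℝ} (hε : 0 < ε) (hstrict : ∀ a ∈ A, 0 < ⟪a, ξ⟫ → ∀ u ∈ B, 0 < ⟪a, ξ - ε • u⟫) :
    {u ∈ B | ∀ a ∈ A, 0 < ⟪a, ξ - ε • u⟫} = {u ∈ B | ∀ a ∈ A, ⟪a, ξ⟫ = 0 → ⟪a, u⟫ < 0} := by
  ext u
  refine and_congr_right fun hu => forall₂_congr fun a ha => ?_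
  rcases (hξ a ha).eq_or_lt with h0 | hpos
  · simp [inner_sub_smul_pos_iff_of_inner_eq_zero h0.symm hε, ← h0]
  · simp [hpos.ne', hstrict a ha hpos u hu]

end

theorem polyhedral_cone_mollifier_stabilization_general
    {E : Type*} [NormedAddCommGroup E] [InnerProductSpace ℝ E]
    (A : Finset E) (B : Set E) (hB : Bornology.IsBounded B)
    (ξ : E) (hξ : ∀ a ∈ A, 0 ≤ ⟪a, ξ⟫) :
    ∃ ε₀ > (0 : ℝ), ∀ ε : ℝ, 0 < ε → ε < ε₀ →
      {u ∈ B | ∀ a ∈ A, 0 < ⟪a, ξ - ε • u⟫} =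
        {u ∈ B | ∀ a ∈ A, ⟪a, ξ⟫ = 0 → ⟪a, u⟫ < 0} := by
  have hstrict : ∀ᶠ ε in 𝓝 (0 : ℝ), ∀ a ∈ A, 0 < ⟪a, ξ⟫ → ∀ u ∈ B, 0 < ⟪a, ξ - ε • u⟫ :=
    (eventually_all_finset A).2 fun _ _ =>
      eventually_imp_distrib_left.2 hB.eventually_forall_inner_sub_smul_pos
  obtain ⟨ε₀, hε₀, hsub⟩ := mem_nhdsGT_iff_exists_Ioo_subset.1 (nhdsWithin_le_nhds hstrict)
  exact ⟨ε₀, hε₀, fun ε hε hεε₀ =>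
    sep_forall_inner_sub_smul_pos_eq hξ hε (hsub ⟨hε, hεε₀⟩)⟩

/-- Stabilization of the sets `U_{σ,ε} = {u ∈ B : ξ − ε • u ∈ Int σ}` for a polyhedral cone
`σ = {x : ⟪a, x⟫ ≥ 0 for all a ∈ A}` containing `ξ`: for all sufficiently small `ε > 0`
the set equals the ε-independent set `{u ∈ B : ⟪a, u⟫ < 0 whenever ⟪a, ξ⟫ = 0}`. -/
theorem polyhedral_cone_mollifier_stabilization
    {E : Type*} [NormedAddCommGroup E] [InnerProductSpace ℝ E] [FiniteDimensional ℝ E]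
    (A : Finset E) (B : Set E) (hB : Bornology.IsBounded B)
    (ξ : E) (hξ : ∀ a ∈ A, 0 ≤ ⟪a, ξ⟫) :
    ∃ ε₀ > (0 : ℝ), ∀ ε : ℝ, 0 < ε → ε < ε₀ →
      {u ∈ B | ∀ a ∈ A, 0 < ⟪a, ξ - ε • u⟫} =
        {u ∈ B | ∀ a ∈ A, ⟪a, ξ⟫ = 0 → ⟪a, u⟫ < 0} :=
  polyhedral_cone_mollifier_stabilization_general A B hB ξ hξ
end

section
/- Given piecewise-linear cone data (ι, σ, m, φ) and a mollifier η with associated f_ε, the following holds: for every ε > 0 the function f_ε is differentiable at every ξ ∈ E, and |f_ε(ξ) − ⟪gradient f_ε ξ, ξ⟫| ≤ ε · Σ_{i ∈ ι} ‖m i‖ for every ξ ∈ E. In particular the functions ξ ↦ f_ε(ξ) − ⟪gradient f_ε ξ, ξ⟫ converge uniformly to zero as ε → 0⁺. -/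
open RealInnerProductSpace MeasureTheory Filter

private lemma chain_lip {ι : Type*} [Fintype ι] (B : ι → Set ℝ)
    (hB : ∀ i, IsClosed (B i)) (hcov : ∀ t ∈ Set.Icc (0:ℝ) 1, ∃ i, t ∈ B i)
    (g : ℝ → ℝ) (hg_cont : Continuous g) (K : ℝ)
    (hg : ∀ i, ∀ s ∈ B i, ∀ t ∈ B i, |g s - g t| ≤ K * |s - t|) :
    |g 1 - g 0| ≤ K := by
  set S : Set ℝ := {t | t ∈ Set.Icc (0:ℝ) 1 ∧ |g t - g 0| ≤ K * t} with hSdef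
  have hS_closed : IsClosed S := by
    have : S = Set.Icc (0:ℝ) 1 ∩ {t | |g t - g 0| ≤ K * t} := rfl
    rw [this]
    exact isClosed_Icc.inter (isClosed_le (by continuity) (by continuity))
  have h0 : (0:ℝ) ∈ S := ⟨⟨le_refl 0, zero_le_one⟩, by simp⟩
  have hbdd : BddAbove S := ⟨1, fun t ht => ht.1.2⟩
  set c := sSup S with hc
  have hcS : c ∈ S := hS_closed.csSup_mem ⟨0, h0⟩ hbdd
  have hc1 : c ≤ 1 := hcS.1.2
  have hc0 : 0 ≤ c := le_csSup hbdd h0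
  rcases eq_or_lt_of_le hc1 with hceq | hclt
  · have h := hcS.2
    rw [hceq] at h
    simpa using h
  · exfalso
    set C : Set ℝ := ⋃ i ∈ {i : ι | c ∉ B i}, B i with hCdef
    have hC_closed : IsClosed C :=
      Set.Finite.isClosed_biUnion (Set.toFinite _) (fun i _ => hB i)
    have hcC : c ∉ C := by
      intro h
      simp only [hCdef, Set.mem_iUnion] at h
      obtain ⟨i, hi, hmem⟩ := h
      exact hi hmem
    obtain ⟨δ, hδpos, hball⟩ := Metric.isOpen_iff.1 hC_closed.isOpen_compl c hcC
    set t := min 1 (c + δ/2) with ht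
    have htc : c < t := lt_min hclt (by linarith)
    have ht1 : t ≤ 1 := min_le_left _ _
    have ht0 : 0 ≤ t := le_trans hc0 htc.le
    have htd : dist t c < δ := by
      have h2 : t ≤ c + δ/2 := min_le_right _ _
      rw [Real.dist_eq, abs_of_nonneg (by linarith)]
      linarith
    obtain ⟨i, hti⟩ := hcov t ⟨ht0, ht1⟩
    have hci : c ∈ B i := by
      by_contra hci
      have hmem : t ∈ C := Set.mem_biUnion hci hti
      exact (hball htd) hmem
    have hb := hg i t hti c hci
    have hts : t ∈ S := by
      refine ⟨⟨ht0, ht1⟩, ?_⟩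
      calc |g t - g 0| ≤ |g t - g c| + |g c - g 0| := abs_sub_le _ _ _
        _ ≤ K * |t - c| + K * c := add_le_add hb hcS.2
        _ = K * t := by rw [abs_of_nonneg (by linarith)]; ring
    exact absurd (le_csSup hbdd hts) (not_le.2 htc)

/-- For piecewise-linear cone data `(ι, σ, m, φ)` and a mollifier `η` with associated
mollifications `f_ε = η_ε ⋆ φ`: each `f_ε` is everywhere differentiable,
`|f_ε(ξ) − ⟪∇f_ε(ξ), ξ⟫| ≤ ε · Σ_i ‖m i‖` for all `ξ`, and consequently the functions
`ξ ↦ f_ε(ξ) − ⟪∇f_ε(ξ), ξ⟫` converge uniformly to zero as `ε → 0⁺`. -/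
theorem mollified_support_function_euler_defect
    (n : ℕ) (hn : 1 ≤ n)
    (ι : Type*) [Fintype ι] [Nonempty ι]
    (σ : ι → Set (EuclideanSpace ℝ (Fin n)))
    (hσ_closed : ∀ i, IsClosed (σ i))
    (hσ_convex : ∀ i, Convex ℝ (σ i))
    (hσ_cone : ∀ i, ∀ t : ℝ, 0 ≤ t → ∀ x ∈ σ i, t • x ∈ σ i)
    (hσ_cover : (⋃ i, σ i) = Set.univ)
    (m : ι → EuclideanSpace ℝ (Fin n))
    (φ : EuclideanSpace ℝ (Fin n) → ℝ)
    (hφ_cont : Continuous φ)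
    (hφ : ∀ i, ∀ x ∈ σ i, φ x = ⟪m i, x⟫)
    (η : EuclideanSpace ℝ (Fin n) → ℝ)
    (hη_smooth : ContDiff ℝ (⊤ : ℕ∞) η) (hη_nonneg : ∀ x, 0 ≤ η x)
    (hη_supp : tsupport η ⊆ Metric.closedBall 0 1)
    (hη_int : ∫ x, η x ∂volume = 1)
    (fε : ℝ → EuclideanSpace ℝ (Fin n) → ℝ)
    (hfε : ∀ ε x, fε ε x = ∫ u, ((ε ^ n)⁻¹ * η (ε⁻¹ • u)) * φ (x - u) ∂volume) :
    (∀ ε : ℝ, 0 < ε → ∀ ξ, DifferentiableAt ℝ (fε ε) ξ ∧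
        |fε ε ξ - ⟪gradient (fε ε) ξ, ξ⟫| ≤ ε * ∑ i, ‖m i‖) ∧
      TendstoUniformly (fun ε ξ => fε ε ξ - ⟪gradient (fε ε) ξ, ξ⟫)
        (fun _ => 0) (nhdsWithin 0 (Set.Ioi 0)) := by
  set L : ℝ := ∑ i, ‖m i‖ with hLdef
  have hL0 : 0 ≤ L := Finset.sum_nonneg (fun i _ => norm_nonneg _)
  -- Lipschitz bound for φ
  have hlip : ∀ x y : EuclideanSpace ℝ (Fin n), |φ x - φ y| ≤ L * ‖x - y‖ := by
    intro x y
    have hcont2 : Continuous (fun t : ℝ => y + t • (x - y)) :=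
      continuous_const.add (continuous_id.smul continuous_const)
    have key := chain_lip (fun i => {t : ℝ | y + t • (x - y) ∈ σ i})
      (fun i => (hσ_closed i).preimage hcont2)
      (fun t _ => by
        have hmem : y + t • (x - y) ∈ ⋃ i, σ i := hσ_cover ▸ Set.mem_univ _
        simpa using Set.mem_iUnion.1 hmem)
      (fun t => φ (y + t • (x - y)))
      (hφ_cont.comp hcont2)
      (L * ‖x - y‖)
      ?_
    · simpa using key
    · intro i s hs t ht
      simp only [Set.mem_setOf_eq] at hs ht
      show |φ (y + s • (x - y)) - φ (y + t • (x - y))| ≤ L * ‖x - y‖ * |s - t|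
      rw [hφ i _ hs, hφ i _ ht]
      have heq : (⟪m i, y + s • (x - y)⟫) - ⟪m i, y + t • (x - y)⟫
          = (s - t) * ⟪m i, x - y⟫ := by
        simp only [inner_add_right, real_inner_smul_right]
        ring
      rw [heq, abs_mul]
      have h1 : |(⟪m i, x - y⟫ : ℝ)| ≤ ‖m i‖ * ‖x - y‖ := abs_real_inner_le_norm _ _
      have h2 : ‖m i‖ ≤ L := Finset.single_le_sum (fun j _ => norm_nonneg (m j)) (Finset.mem_univ i)
      calc |s - t| * |(⟪m i, x - y⟫ : ℝ)| ≤ |s - t| * (L * ‖x - y‖) := by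
            refine mul_le_mul_of_nonneg_left ?_ (abs_nonneg _)
            exact le_trans h1 (mul_le_mul_of_nonneg_right h2 (norm_nonneg _))
        _ = L * ‖x - y‖ * |s - t| := by ring
  -- positive homogeneity of φ
  have hhom : ∀ t : ℝ, 0 ≤ t → ∀ x : EuclideanSpace ℝ (Fin n), φ (t • x) = t * φ x := by
    intro t ht x
    have hmem : x ∈ ⋃ i, σ i := hσ_cover ▸ Set.mem_univ _
    obtain ⟨i, hi⟩ := Set.mem_iUnion.1 hmem
    rw [hφ i _ (hσ_cone i t ht x hi), hφ i x hi, real_inner_smul_right]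
  -- alternate representation of fε
  have hrepr : ∀ a : ℝ, 0 < a → ∀ ξ : EuclideanSpace ℝ (Fin n), fε a ξ = ∫ v, η v * φ (ξ - a • v) ∂volume := by
    intro a ha ξ
    have hapos : (0:ℝ) < a ^ n := pow_pos ha n
    have key := MeasureTheory.Measure.integral_comp_smul volume
      (fun u => ((a ^ n)⁻¹ * η (a⁻¹ • u)) * φ (ξ - u)) a
    rw [finrank_euclideanSpace_fin] at key
    have h1 : (fun v : EuclideanSpace ℝ (Fin n) => ((a ^ n)⁻¹ * η (a⁻¹ • (a • v))) * φ (ξ - a • v))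
        = fun v : EuclideanSpace ℝ (Fin n) => (a ^ n)⁻¹ * (η v * φ (ξ - a • v)) := by
      funext v
      rw [smul_smul, inv_mul_cancel₀ ha.ne', one_smul]
      ring
    rw [h1, integral_const_mul, abs_of_pos (inv_pos.2 hapos), smul_eq_mul] at key
    have := mul_left_cancel₀ (inv_ne_zero hapos.ne') key
    rw [hfε]
    exact this.symm
  -- compact support of η
  have hηcs : HasCompactSupport η :=
    IsCompact.of_isClosed_subset (isCompact_closedBall 0 1) (isClosed_tsupport η) hη_supp
  -- integrability of the shifted integrands
  have hint : ∀ (a : ℝ) (ξ : EuclideanSpace ℝ (Fin n)),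
      Integrable (fun v => η v * φ (ξ - a • v)) volume := by
    intro a ξ
    refine Continuous.integrable_of_hasCompactSupport ?_ ?_
    · exact hη_smooth.continuous.mul
        (hφ_cont.comp (continuous_const.sub (continuous_id.const_smul a)))
    · exact hηcs.mul_right
  have hη_integrable : Integrable η volume :=
    hη_smooth.continuous.integrable_of_hasCompactSupport hηcs
  -- Lipschitz dependence on the mollification parameter
  have hdiff_eps : ∀ a b : ℝ, 0 < a → 0 < b → ∀ ξ : EuclideanSpace ℝ (Fin n),
      |fε a ξ - fε b ξ| ≤ L * |a - b| := by
    intro a b ha hb ξ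
    rw [hrepr a ha ξ, hrepr b hb ξ, ← integral_sub (hint a ξ) (hint b ξ)]
    have hbound : ∀ v : EuclideanSpace ℝ (Fin n),
        |η v * φ (ξ - a • v) - η v * φ (ξ - b • v)| ≤ η v * (L * |a - b|) := by
      intro v
      rw [← mul_sub, abs_mul, abs_of_nonneg (hη_nonneg v)]
      by_cases hv : v ∈ tsupport η
      · have hv1 : ‖v‖ ≤ 1 := by
          have := hη_supp hv
          rwa [Metric.mem_closedBall, dist_zero_right] at this
        have he : (ξ - a • v) - (ξ - b • v) = (b - a) • v := by
          rw [sub_smul]; abel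
        have h1 := hlip (ξ - a • v) (ξ - b • v)
        rw [he, norm_smul, Real.norm_eq_abs] at h1
        have h2 : |b - a| * ‖v‖ ≤ |a - b| := by
          rw [abs_sub_comm b a]
          calc |a - b| * ‖v‖ ≤ |a - b| * 1 := mul_le_mul_of_nonneg_left hv1 (abs_nonneg _)
            _ = |a - b| := mul_one _
        have h3 : |φ (ξ - a • v) - φ (ξ - b • v)| ≤ L * |a - b| := by
          calc |φ (ξ - a • v) - φ (ξ - b • v)| ≤ L * (|b - a| * ‖v‖) := h1
            _ ≤ L * |a - b| := mul_le_mul_of_nonneg_left h2 hL0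
        exact mul_le_mul_of_nonneg_left h3 (hη_nonneg v)
      · have h0 : η v = 0 := image_eq_zero_of_notMem_tsupport hv
        simp [h0]
    calc |∫ v, (η v * φ (ξ - a • v) - η v * φ (ξ - b • v)) ∂volume|
        ≤ ∫ v, |η v * φ (ξ - a • v) - η v * φ (ξ - b • v)| ∂volume := by
          simpa [Real.norm_eq_abs] using
            norm_integral_le_integral_norm (fun v => η v * φ (ξ - a • v) - η v * φ (ξ - b • v))
      _ ≤ ∫ v, η v * (L * |a - b|) ∂volume := by
          refine integral_mono ((hint a ξ).sub (hint b ξ)).abs (hη_integrable.mul_const _) hbound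
      _ = L * |a - b| := by rw [integral_mul_const, hη_int, one_mul]
  -- smoothness of fε for ε > 0
  have hsmooth : ∀ ε : ℝ, 0 < ε → ContDiff ℝ ((⊤:ℕ∞) : WithTop ℕ∞) (fε ε) := by
    intro ε hε
    have hηεcd : ContDiff ℝ (⊤ : ℕ∞) (fun x : EuclideanSpace ℝ (Fin n) => (ε ^ n)⁻¹ * η (ε⁻¹ • x)) :=
      contDiff_const.mul (hη_smooth.comp (contDiff_id.const_smul ε⁻¹))
    have hηεcs : HasCompactSupport (fun x : EuclideanSpace ℝ (Fin n) => (ε ^ n)⁻¹ * η (ε⁻¹ • x)) := by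
      refine HasCompactSupport.intro (isCompact_closedBall (0 : EuclideanSpace ℝ (Fin n)) ε) ?_
      intro x hx
      have hns : ε⁻¹ • x ∉ tsupport η := by
        intro h
        have h1 := hη_supp h
        rw [Metric.mem_closedBall, dist_zero_right, norm_smul, norm_inv,
          Real.norm_eq_abs, abs_of_pos hε, inv_mul_eq_div, div_le_one hε] at h1
        rw [Metric.mem_closedBall, dist_zero_right, not_le] at hx
        linarith
      rw [image_eq_zero_of_notMem_tsupport hns, mul_zero]
    have hconv : fε ε = convolution (fun x : EuclideanSpace ℝ (Fin n) => (ε ^ n)⁻¹ * η (ε⁻¹ • x)) φ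
        (ContinuousLinearMap.lsmul ℝ ℝ) volume := by
      funext x
      rw [hfε, convolution_def]
      simp only [ContinuousLinearMap.lsmul_apply, smul_eq_mul]
    rw [hconv]
    have hφloc : MeasureTheory.LocallyIntegrable φ (volume : MeasureTheory.Measure (EuclideanSpace ℝ (Fin n))) :=
      hφ_cont.locallyIntegrable
    exact hηεcs.contDiff_convolution_left (ContinuousLinearMap.lsmul ℝ ℝ) (hηεcd.of_le (by simp)) hφloc
  -- the main pointwise estimate
  have main : ∀ ε : ℝ, 0 < ε → ∀ ξ, DifferentiableAt ℝ (fε ε) ξ ∧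
      |fε ε ξ - ⟪gradient (fε ε) ξ, ξ⟫| ≤ ε * L := by
    intro ε hε ξ
    have hdiffAt : ∀ ζ, DifferentiableAt ℝ (fε ε) ζ :=
      fun ζ => ((hsmooth ε hε).differentiable (by simp)).differentiableAt
    refine ⟨hdiffAt ξ, ?_⟩
    have hgrad : (⟪gradient (fε ε) ξ, ξ⟫ : ℝ) = fderiv ℝ (fε ε) ξ ξ := by
      unfold gradient
      exact InnerProductSpace.toDual_symm_apply
    set D : ℝ := fderiv ℝ (fε ε) ξ ξ with hD
    -- derivative of t ↦ fε ε (t • ξ) at 1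
    have hF : HasDerivAt (fun t : ℝ => fε ε (t • ξ)) D 1 := by
      have h1 : HasFDerivAt (fε ε) (fderiv ℝ (fε ε) ξ) ((1:ℝ) • ξ) := by
        rw [one_smul]; exact (hdiffAt ξ).hasFDerivAt
      have h2 : HasDerivAt (fun t : ℝ => t • ξ) ξ 1 := by
        simpa using (hasDerivAt_id (1:ℝ)).smul_const ξ
      exact h1.comp_hasDerivAt 1 h2
    -- scaling identity
    have hscale : ∀ t : ℝ, 0 < t → fε ε (t • ξ) = t * fε (ε / t) ξ := by
      intro t ht
      rw [hrepr ε hε (t • ξ), hrepr (ε / t) (div_pos hε ht) ξ, ← integral_const_mul]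
      congr 1
      funext v
      have hsm : t • ξ - ε • v = t • (ξ - (ε / t) • v) := by
        rw [smul_sub, smul_smul]
        congr 2
        field_simp
      rw [hsm, hhom t ht.le]
      ring
    -- derivative of t ↦ fε (ε/t) ξ at 1
    have hG : HasDerivAt (fun t : ℝ => fε (ε / t) ξ) (D - fε ε ξ) 1 := by
      have h1 : HasDerivAt (fun t : ℝ => fε ε (t • ξ) / t) (D - fε ε ξ) 1 := by
        have := hF.div (hasDerivAt_id' 1) one_ne_zero
        simpa [one_smul, Pi.div_def] using this
      have hev : (fun t : ℝ => fε (ε / t) ξ) =ᶠ[nhds 1] fun t : ℝ => fε ε (t • ξ) / t := by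
        filter_upwards [eventually_gt_nhds one_pos] with t ht
        rw [hscale t ht, mul_div_cancel_left₀ _ ht.ne']
      exact h1.congr_of_eventuallyEq hev
    -- bound the derivative by L * ε via the Lipschitz estimate
    have hslope := hasDerivAt_iff_tendsto_slope.1 hG
    have habs : Tendsto (fun t : ℝ => |slope (fun t : ℝ => fε (ε / t) ξ) 1 t|)
        (nhdsWithin 1 {(1:ℝ)}ᶜ) (nhds |D - fε ε ξ|) :=
      (continuous_abs.tendsto _).comp hslope
    have hbnd : ∀ᶠ t in nhdsWithin 1 {(1:ℝ)}ᶜ,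
        |slope (fun t : ℝ => fε (ε / t) ξ) 1 t| ≤ L * ε / t := by
      filter_upwards [self_mem_nhdsWithin,
        (eventually_gt_nhds one_pos).filter_mono nhdsWithin_le_nhds] with t ht1 ht0
      have htne : t ≠ 1 := by simpa using ht1
      rw [slope_def_field, abs_div]
      rw [div_le_div_iff₀ (abs_pos.2 (sub_ne_zero.2 htne)) ht0]
      have h1 : |fε (ε / t) ξ - fε (ε / 1) ξ| ≤ L * |ε / t - ε| := by
        simpa using hdiff_eps (ε / t) ε (div_pos hε ht0) hε ξ
      have he : |ε / t - ε| = ε * |t - 1| / t := by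
        have heq : ε / t - ε = -(ε * (t - 1) / t) := by field_simp; ring
        rw [heq, abs_neg, abs_div, abs_of_pos ht0, abs_mul, abs_of_pos hε]
      rw [he] at h1
      have h2 : |fε (ε / t) ξ - fε (ε / 1) ξ| * t ≤ (L * (ε * |t - 1| / t)) * t :=
        mul_le_mul_of_nonneg_right h1 ht0.le
      calc |fε (ε / t) ξ - fε (ε / 1) ξ| * t ≤ (L * (ε * |t - 1| / t)) * t := h2
        _ = L * ε * |t - 1| := by field_simp
    have hlim2 : Tendsto (fun t : ℝ => L * ε / t) (nhdsWithin 1 {(1:ℝ)}ᶜ) (nhds (L * ε)) := by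
      have h : Tendsto (fun t : ℝ => L * ε / t) (nhds 1) (nhds (L * ε / 1)) :=
        tendsto_const_nhds.div tendsto_id one_ne_zero
      rw [div_one] at h
      exact h.mono_left nhdsWithin_le_nhds
    have hDb : |D - fε ε ξ| ≤ L * ε := le_of_tendsto_of_tendsto habs hlim2 hbnd
    rw [hgrad]
    calc |fε ε ξ - D| = |D - fε ε ξ| := abs_sub_comm _ _
      _ ≤ L * ε := hDb
      _ = ε * L := mul_comm _ _
  refine ⟨main, ?_⟩
  -- uniform convergence
  rw [Metric.tendstoUniformly_iff]
  intro δ hδ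
  have hL1 : (0:ℝ) < L + 1 := by linarith
  have hmem : Set.Ioo (0:ℝ) (δ / (L + 1)) ∈ nhdsWithin (0:ℝ) (Set.Ioi 0) :=
    Ioo_mem_nhdsGT_of_mem ⟨le_refl 0, div_pos hδ hL1⟩
  filter_upwards [hmem] with ε hε ξ
  have hb := (main ε hε.1 ξ).2
  rw [dist_comm, Real.dist_eq, sub_zero]
  calc |fε ε ξ - ⟪gradient (fε ε) ξ, ξ⟫| ≤ ε * L := hb
    _ ≤ ε * (L + 1) := by nlinarith [hε.1]
    _ < δ := by
        have h := hε.2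
        rw [lt_div_iff₀ hL1] at h
        linarith
end

section
/- Given piecewise-linear cone data (ι, σ, m, φ) and a mollifier η with associated homogenized smoothings φ_ε, the following holds: if x ∈ E, x ≠ 0, and x lies in the interior of σ i for some i ∈ ι, then gradient φ_ε x tends to m i as ε → 0⁺; moreover there exists ε₀ > 0 such that gradient f_ε x = m i for all 0 < ε < ε₀. -/
open RealInnerProductSpace MeasureTheory Filter Topology

section Aux

variable {E : Type*} [NormedAddCommGroup E] [InnerProductSpace ℝ E] [CompleteSpace E]

open InnerProductSpace in
lemma aux_hasFDerivAt_norm_of_ne {x : E} (hx : x ≠ 0) :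
    HasFDerivAt (fun ξ : E => ‖ξ‖) (toDual ℝ E (‖x‖⁻¹ • x)) x := by
  set q : E → ℝ := fun ξ : E => ⟪ξ, ξ⟫ with hqdef
  have hq : HasFDerivAt q
      ((fderivInnerCLM ℝ (x, x)).comp
        ((ContinuousLinearMap.id ℝ E).prod (ContinuousLinearMap.id ℝ E))) x :=
    (hasFDerivAt_id x).inner ℝ (hasFDerivAt_id x)
  have hxn : ‖x‖ ≠ 0 := norm_ne_zero_iff.2 hx
  have hqx : q x ≠ 0 := by
    simp only [hqdef, real_inner_self_eq_norm_sq]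
    positivity
  have hs : HasDerivAt Real.sqrt (1 / (2 * Real.sqrt (q x))) (q x) :=
    Real.hasDerivAt_sqrt hqx
  have h := hs.comp_hasFDerivAt x hq
  have heq : Real.sqrt ∘ q = fun ξ : E => ‖ξ‖ := by
    funext ξ
    simp only [Function.comp_apply, hqdef, real_inner_self_eq_norm_sq,
      Real.sqrt_sq (norm_nonneg _)]
  rw [heq] at h
  have hsq : Real.sqrt (q x) = ‖x‖ := by
    simp only [hqdef, real_inner_self_eq_norm_sq, Real.sqrt_sq (norm_nonneg _)]
  refine h.congr_fderiv ?_
  ext v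
  simp only [toDual_apply_apply, ContinuousLinearMap.coe_smul', Pi.smul_apply,
    ContinuousLinearMap.coe_comp', Function.comp_apply, ContinuousLinearMap.prod_apply,
    ContinuousLinearMap.coe_id', id_eq, fderivInnerCLM_apply, hsq, smul_eq_mul,
    real_inner_smul_left]
  rw [real_inner_comm v x]
  field_simp
  ring

open InnerProductSpace in
lemma aux_hasFDerivAt_inner (a x : E) :
    HasFDerivAt (fun z : E => ⟪a, z⟫) (toDual ℝ E a) x := by
  have h := (toDual ℝ E a).hasFDerivAt (x := x)
  have he : (⇑(toDual ℝ E a) : E → ℝ) = fun z : E => ⟪a, z⟫ := by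
    funext z; simp [toDual_apply_apply]
  rwa [he] at h

lemma aux_hasGradientAt_affine (a : E) (c : ℝ) (x : E) :
    HasGradientAt (fun z : E => ⟪a, z⟫ - c) a x := by
  rw [hasGradientAt_iff_hasFDerivAt]
  simpa using (aux_hasFDerivAt_inner a x).sub_const c

open InnerProductSpace in
lemma aux_hasGradientAt_inner_sub_mul_norm (a : E) (c : ℝ) {x : E} (hx : x ≠ 0) :
    HasGradientAt (fun ξ : E => ⟪a, ξ⟫ - c * ‖ξ‖) (a - c • (‖x‖⁻¹ • x)) x := by
  rw [hasGradientAt_iff_hasFDerivAt]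
  have h := (aux_hasFDerivAt_inner a x).sub ((aux_hasFDerivAt_norm_of_ne hx).const_mul c)
  refine h.congr_fderiv ?_
  ext v
  simp [toDual_apply_apply, inner_sub_left, real_inner_smul_left]

end Aux

open InnerProductSpace in
lemma aux_smoothing_eq_affine {n : ℕ}
    (η φ : EuclideanSpace ℝ (Fin n) → ℝ)
    (hη_cont : Continuous η)
    (hη_supp : tsupport η ⊆ Metric.closedBall 0 1)
    (hη_int : ∫ x, η x ∂volume = 1)
    (hφ_cont : Continuous φ)
    (a y : EuclideanSpace ℝ (Fin n)) {ε : ℝ} (hε : 0 < ε)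
    (hy : ∀ u : EuclideanSpace ℝ (Fin n), ‖u‖ ≤ ε → φ (y - u) = ⟪a, y - u⟫) :
    ∫ u, ((ε ^ n)⁻¹ * η (ε⁻¹ • u)) * φ (y - u) ∂volume
      = ⟪a, y⟫ - ε * ∫ v, η v * ⟪a, v⟫ ∂volume := by
  have hcs : HasCompactSupport η :=
    (isCompact_closedBall (0 : EuclideanSpace ℝ (Fin n)) 1).of_isClosed_subset
      (isClosed_tsupport η) hη_supp
  have hηint : Integrable η volume := hη_cont.integrable_of_hasCompactSupport hcs
  have hinner_cont : Continuous fun v : EuclideanSpace ℝ (Fin n) => ⟪a, v⟫ :=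
    continuous_const.inner continuous_id
  have hw : Integrable (fun v : EuclideanSpace ℝ (Fin n) => η v * ⟪a, v⟫) volume :=
    (hη_cont.mul hinner_cont).integrable_of_hasCompactSupport (hcs.mul_right)
  have hre : (fun u : EuclideanSpace ℝ (Fin n) => ((ε ^ n)⁻¹ * η (ε⁻¹ • u)) * φ (y - u))
      = fun u => (ε ^ n)⁻¹ *
          ((fun v : EuclideanSpace ℝ (Fin n) => η v * φ (y - ε • v)) (ε⁻¹ • u)) := by
    funext u
    have hu : ε • ε⁻¹ • u = u := by rw [smul_smul, mul_inv_cancel₀ hε.ne', one_smul]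
    simp only [hu, mul_assoc]
  have hcv := Measure.integral_comp_inv_smul_of_nonneg volume
    (fun v : EuclideanSpace ℝ (Fin n) => η v * φ (y - ε • v)) hε.le
  rw [finrank_euclideanSpace_fin] at hcv
  rw [hre, integral_const_mul, hcv, smul_eq_mul, ← mul_assoc,
    inv_mul_cancel₀ (pow_ne_zero n hε.ne'), one_mul]
  have hI : (fun v : EuclideanSpace ℝ (Fin n) => η v * φ (y - ε • v))
      = fun v => η v * ⟪a, y⟫ - ε * (η v * ⟪a, v⟫) := by
    funext v
    by_cases hv : v ∈ tsupport η
    · have hv1 : ‖v‖ ≤ 1 := by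
        have := hη_supp hv
        simpa [Metric.mem_closedBall, dist_zero_right] using this
      have hvn : ‖ε • v‖ ≤ ε := by
        rw [norm_smul, Real.norm_eq_abs, abs_of_pos hε]
        calc ε * ‖v‖ ≤ ε * 1 := by nlinarith
          _ = ε := mul_one ε
      rw [hy _ hvn, inner_sub_right, real_inner_smul_right]
      ring
    · simp [image_eq_zero_of_notMem_tsupport hv]
  rw [hI, integral_sub (hηint.mul_const _) (hw.const_mul ε), integral_mul_const,
    integral_const_mul, hη_int, one_mul]

/-- Maximal-cone case of the limit of the gradients of homogenized smoothings: if `x ≠ 0`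
lies in the interior of the cone `σ i`, then `∇φ_ε(x) → m i` as `ε → 0⁺`, and moreover
`∇f_ε(x) = m i` exactly, for all sufficiently small `ε > 0`. -/
theorem gradient_homogenized_smoothing_interior_limit
    (n : ℕ) (hn : 1 ≤ n)
    (ι : Type*) [Fintype ι] [Nonempty ι]
    (σ : ι → Set (EuclideanSpace ℝ (Fin n)))
    (hσ_closed : ∀ i, IsClosed (σ i))
    (hσ_convex : ∀ i, Convex ℝ (σ i))
    (hσ_cone : ∀ i, ∀ t : ℝ, 0 ≤ t → ∀ x ∈ σ i, t • x ∈ σ i)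
    (hσ_cover : (⋃ i, σ i) = Set.univ)
    (m : ι → EuclideanSpace ℝ (Fin n))
    (φ : EuclideanSpace ℝ (Fin n) → ℝ)
    (hφ_cont : Continuous φ)
    (hφ : ∀ i, ∀ x ∈ σ i, φ x = ⟪m i, x⟫)
    (η : EuclideanSpace ℝ (Fin n) → ℝ)
    (hη_smooth : ContDiff ℝ (⊤ : ℕ∞) η) (hη_nonneg : ∀ x, 0 ≤ η x)
    (hη_supp : tsupport η ⊆ Metric.closedBall 0 1)
    (hη_int : ∫ x, η x ∂volume = 1)
    (fε : ℝ → EuclideanSpace ℝ (Fin n) → ℝ)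
    (hfε : ∀ ε x, fε ε x = ∫ u, ((ε ^ n)⁻¹ * η (ε⁻¹ • u)) * φ (x - u) ∂volume)
    (φε : ℝ → EuclideanSpace ℝ (Fin n) → ℝ)
    (hφε : ∀ ε ξ, φε ε ξ = ‖ξ‖ * fε ε (‖ξ‖⁻¹ • ξ))
    (x : EuclideanSpace ℝ (Fin n)) (hx : x ≠ 0)
    (i : ι) (hxi : x ∈ interior (σ i)) :
    Tendsto (fun ε => gradient (φε ε) x) (𝓝[>] 0) (𝓝 (m i)) ∧
      ∃ ε₀ > (0 : ℝ), ∀ ε : ℝ, 0 < ε → ε < ε₀ → gradient (fε ε) x = m i := by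
  have hη_cont : Continuous η := hη_smooth.continuous
  have hxn : ‖x‖ ≠ 0 := norm_ne_zero_iff.2 hx
  set c₁ : ℝ := ∫ v, η v * ⟪m i, v⟫ ∂volume with hc₁
  set x' : EuclideanSpace ℝ (Fin n) := ‖x‖⁻¹ • x with hx'def
  -- x' lies in the interior of σ i
  have hx'i : x' ∈ interior (σ i) := by
    have hopen : IsOpenMap (fun y : EuclideanSpace ℝ (Fin n) => ‖x‖⁻¹ • y) := isOpenMap_smul₀ (inv_ne_zero hxn)
    have h1 := hopen.image_interior_subset (σ i)
    have h2 : (fun y : EuclideanSpace ℝ (Fin n) => ‖x‖⁻¹ • y) '' σ i ⊆ σ i := by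
      rintro _ ⟨z, hz, rfl⟩
      exact hσ_cone i _ (inv_nonneg.2 (norm_nonneg x)) z hz
    exact interior_mono h2 (h1 ⟨x, hxi, rfl⟩)
  obtain ⟨ρ, hρ, hball⟩ := Metric.isOpen_iff.1 isOpen_interior x' hx'i
  have hball' : Metric.ball x' ρ ⊆ σ i := hball.trans interior_subset
  obtain ⟨ρ₂, hρ₂, hball₂⟩ := Metric.isOpen_iff.1 isOpen_interior x hxi
  have hball₂' : Metric.ball x ρ₂ ⊆ σ i := hball₂.trans interior_subset
  -- the key pointwise identity for fε
  have key : ∀ (y : EuclideanSpace ℝ (Fin n)) (ε : ℝ), 0 < ε → (∀ u : EuclideanSpace ℝ (Fin n), ‖u‖ ≤ ε → y - u ∈ σ i) →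
      fε ε y = ⟪m i, y⟫ - ε * c₁ := by
    intro y ε hε hy
    rw [hfε]
    exact aux_smoothing_eq_affine η φ hη_cont hη_supp hη_int hφ_cont (m i) y hε
      (fun u hu => hφ i _ (hy u hu))
  constructor
  · -- limit of gradients of φε
    have hgrad : ∀ ε : ℝ, 0 < ε → ε < ρ / 2 →
        gradient (φε ε) x = m i - (ε * c₁) • x' := by
      intro ε hε hερ
      have hG : HasGradientAt (fun ξ : EuclideanSpace ℝ (Fin n) => ⟪m i, ξ⟫ - (ε * c₁) * ‖ξ‖)
          (m i - (ε * c₁) • x') x := aux_hasGradientAt_inner_sub_mul_norm (m i) (ε * c₁) hx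
      have hev : φε ε =ᶠ[nhds x] fun ξ : EuclideanSpace ℝ (Fin n) => ⟪m i, ξ⟫ - (ε * c₁) * ‖ξ‖ := by
        have hcont : ContinuousAt (fun ξ : EuclideanSpace ℝ (Fin n) => ‖ξ‖⁻¹ • ξ) x :=
          ((continuousAt_id.norm).inv₀ hxn).smul continuousAt_id
        have hmem : Metric.ball x' (ρ / 2) ∈ nhds x' :=
          Metric.ball_mem_nhds _ (by positivity)
        have hpre : (fun ξ : EuclideanSpace ℝ (Fin n) => ‖ξ‖⁻¹ • ξ) ⁻¹' Metric.ball x' (ρ / 2) ∈ nhds x :=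
          hcont.preimage_mem_nhds hmem
        have hne : {ξ : EuclideanSpace ℝ (Fin n) | ξ ≠ 0} ∈ nhds x := by
          exact IsOpen.mem_nhds isOpen_compl_singleton hx
        filter_upwards [hpre, hne] with ξ hξ1 hξ2
        have hξn : ‖ξ‖ ≠ 0 := norm_ne_zero_iff.2 hξ2
        have hcb : ∀ u : EuclideanSpace ℝ (Fin n), ‖u‖ ≤ ε → ‖ξ‖⁻¹ • ξ - u ∈ σ i := by
          intro u hu
          apply hball'
          rw [Metric.mem_ball]
          calc dist (‖ξ‖⁻¹ • ξ - u) x' ≤ dist (‖ξ‖⁻¹ • ξ - u) (‖ξ‖⁻¹ • ξ) + dist (‖ξ‖⁻¹ • ξ) x' :=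
                dist_triangle _ _ _
            _ < ρ / 2 + ρ / 2 := by
                apply add_lt_add_of_le_of_lt
                · rw [dist_eq_norm]
                  simpa using (hu.trans_lt hερ).le
                · exact hξ1
            _ = ρ := by ring
        rw [hφε, key _ ε hε hcb, mul_sub, real_inner_smul_right, ← mul_assoc,
          mul_inv_cancel₀ hξn, one_mul]
        ring
      rw [Filter.EventuallyEq.gradient_eq hev, hG.gradient]
    have hlim : Tendsto (fun ε : ℝ => m i - (ε * c₁) • x') (𝓝[>] 0) (nhds (m i)) := by
      have hc : Continuous (fun ε : ℝ => m i - (ε * c₁) • x') :=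
        continuous_const.sub ((continuous_id.mul continuous_const).smul continuous_const)
      have h0 := (hc.tendsto 0).mono_left (nhdsWithin_le_nhds (s := Set.Ioi (0:ℝ)))
      simpa using h0
    refine hlim.congr' ?_
    have hIoo : Set.Ioo (0:ℝ) (ρ / 2) ∈ 𝓝[>] (0:ℝ) :=
      Ioo_mem_nhdsGT_of_mem ⟨le_refl 0, by positivity⟩
    filter_upwards [hIoo] with ε hε
    exact (hgrad ε hε.1 hε.2).symm
  · -- exact gradient of fε
    refine ⟨ρ₂ / 2, by positivity, fun ε hε hερ => ?_⟩
    have hG : HasGradientAt (fun z : EuclideanSpace ℝ (Fin n) => ⟪m i, z⟫ - ε * c₁) (m i) x :=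
      aux_hasGradientAt_affine (m i) (ε * c₁) x
    have hev : fε ε =ᶠ[nhds x] fun z : EuclideanSpace ℝ (Fin n) => ⟪m i, z⟫ - ε * c₁ := by
      have hmem : Metric.ball x (ρ₂ / 2) ∈ nhds x := Metric.ball_mem_nhds _ (by positivity)
      filter_upwards [hmem] with z hz
      apply key z ε hε
      intro u hu
      apply hball₂'
      rw [Metric.mem_ball]
      calc dist (z - u) x ≤ dist (z - u) z + dist z x := dist_triangle _ _ _
        _ < ρ₂ / 2 + ρ₂ / 2 := by
            apply add_lt_add_of_le_of_lt
            · rw [dist_eq_norm]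
              simpa using (hu.trans_lt hερ).le
            · exact hz
        _ = ρ₂ := by ring
    rw [Filter.EventuallyEq.gradient_eq hev, hG.gradient]
end

section
/- Given piecewise-linear cone data (ι, σ, m, φ) and a mollifier η with associated homogenized smoothings φ_ε, the following holds: for every ξ ∈ E with ξ ≠ 0 there exists ε₀ > 0 such that for all 0 < ε < ε₀ the distance from gradient φ_ε ξ to the convex hull of {m i : ξ ∈ σ i} is at most ε · Σ_{i ∈ ι} ‖m i‖. -/
open RealInnerProductSpace MeasureTheory
open MeasureTheory.Measure
open scoped ENNReal NNReal

lemma pw_lipschitz {E : Type*} [NormedAddCommGroup E] [InnerProductSpace ℝ E]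
    {ι : Type*} [Fintype ι] [Nonempty ι]
    (σ : ι → Set E) (hσ_closed : ∀ i, IsClosed (σ i)) (hσ_convex : ∀ i, Convex ℝ (σ i))
    (hσ_cover : (⋃ i, σ i) = Set.univ)
    (m : ι → E) (φ : E → ℝ) (hφ_cont : Continuous φ)
    (hφ : ∀ i, ∀ x ∈ σ i, φ x = ⟪m i, x⟫)
    {M : ℝ} (hM : ∀ i, ‖m i‖ ≤ M) :
    ∀ y z : E, |φ z - φ y| ≤ M * ‖z - y‖ := by
  intro y z
  have hM0 : 0 ≤ M := le_trans (norm_nonneg _) (hM (Classical.arbitrary ι))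
  set γ : ℝ → E := fun t => y + t • (z - y) with hγ
  have hγc : Continuous γ := by continuity
  set h : ℝ → ℝ := fun t => φ (γ t) with hh
  have hhc : Continuous h := hφ_cont.comp hγc
  set L : ℝ := M * ‖z - y‖ with hL
  have hL0 : 0 ≤ L := mul_nonneg hM0 (norm_nonneg _)
  -- affine on each piece
  have haff : ∀ i, ∀ s t : ℝ, γ s ∈ σ i → γ t ∈ σ i → h t - h s = (t - s) * ⟪m i, z - y⟫ := by
    intro i s t hs ht
    have := hφ i _ hs
    have := hφ i _ ht
    simp only [hh, hγ] at *
    rw [hφ i _ ht, hφ i _ hs]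
    simp [inner_add_right, real_inner_smul_right]
    ring
  set U : Set ℝ := {t | t ∈ Set.Icc (0:ℝ) 1 ∧ |h t - h 0| ≤ L * t} with hU
  have hU0 : (0:ℝ) ∈ U := by simp [hU]
  have hUne : U.Nonempty := ⟨0, hU0⟩
  have hUbdd : BddAbove U := BddAbove.mono (fun t ht => ht.1) bddAbove_Icc
  have hUclosed : IsClosed U := by
    have : U = Set.Icc (0:ℝ) 1 ∩ {t | |h t - h 0| ≤ L * t} := rfl
    rw [this]
    exact isClosed_Icc.inter (isClosed_le (by continuity) (by continuity))
  set c : ℝ := sSup U with hc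
  have hcU : c ∈ U := hUclosed.csSup_mem hUne hUbdd
  have hc1 : c = 1 := by
    by_contra hne
    have hclt : c < 1 := lt_of_le_of_ne hcU.1.2 hne
    -- pigeonhole: some cone contains points just right of c
    have hpig : ∃ j, ∀ δ : ℝ, 0 < δ → ∃ t, c < t ∧ t < c + δ ∧ γ t ∈ σ j := by
      by_contra hcon
      push_neg at hcon
      choose δf hδf1 hδf2 using hcon
      set δ₀ : ℝ := min (Finset.univ.inf' Finset.univ_nonempty δf) (1 - c) with hδ₀
      have hδ₀pos : 0 < δ₀ := by
        apply lt_min _ (by linarith)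
        exact (Finset.lt_inf'_iff _).2 fun i _ => hδf1 i
      set t := c + δ₀ / 2 with hts
      have h1 : γ t ∈ ⋃ i, σ i := by rw [hσ_cover]; trivial
      obtain ⟨s, ⟨j, rfl⟩, hmem⟩ := h1
      have hle : δ₀ ≤ δf j := le_trans (min_le_left _ _) (Finset.inf'_le _ (Finset.mem_univ j))
      exact hδf2 j t (by simp only [hts]; linarith) (by simp only [hts]; linarith) hmem
    obtain ⟨j, hj⟩ := hpig
    -- c itself is in σ j (closedness)
    have hcj : γ c ∈ σ j := by
      rw [← (hσ_closed j).closure_eq]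
      apply Metric.mem_closure_iff.mpr
      intro r hr
      have hcont := hγc.continuousAt (x := c)
      rw [Metric.continuousAt_iff] at hcont
      obtain ⟨δ, hδpos, hδ⟩ := hcont r hr
      obtain ⟨t, ht1, ht2, ht3⟩ := hj δ hδpos
      exact ⟨γ t, ht3, by rw [dist_comm]; exact hδ (by rw [Real.dist_eq, abs_lt]; constructor <;> linarith)⟩
    -- pick a point strictly right of c in σ j, up to 1
    obtain ⟨t, htc, ht1, htj⟩ := hj (1 - c) (by linarith)
    have htU : t ∈ U := by
      constructor
      · exact ⟨by linarith [hcU.1.1], by linarith⟩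
      · have hdiff := haff j c t hcj htj
        have h1 : |h t - h 0| ≤ |h t - h c| + |h c - h 0| := by
          have : h t - h 0 = (h t - h c) + (h c - h 0) := by ring
          rw [this]; exact abs_add_le _ _
        have h2 : |h t - h c| ≤ (t - c) * L := by
          rw [hdiff, abs_mul]
          apply mul_le_mul _ _ (abs_nonneg _) (by linarith)
          · rw [abs_of_nonneg (by linarith)]
          · calc |⟪m j, z - y⟫| ≤ ‖m j‖ * ‖z - y‖ := abs_real_inner_le_norm _ _
              _ ≤ L := mul_le_mul_of_nonneg_right (hM j) (norm_nonneg _)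
        calc |h t - h 0| ≤ (t - c) * L + L * c := by linarith [hcU.2]
          _ = L * t := by ring
    have := le_csSup hUbdd htU
    linarith
  have := hcU.2
  rw [hc1] at this
  have hγ1 : γ 1 = z := by simp [hγ]
  have hγ0 : γ 0 = y := by simp [hγ]
  simpa [hh, hγ1, hγ0, hL] using this

section sel
variable {n : ℕ} {ι : Type*} [Fintype ι] [Nonempty ι] [LinearOrder ι]
variable (σ : ι → Set (EuclideanSpace ℝ (Fin n))) (m : ι → EuclideanSpace ℝ (Fin n))

def pieces (i : ι) : Set (EuclideanSpace ℝ (Fin n)) :=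
  interior (σ i) \ ⋃ j, ⋃ (_ : j < i), interior (σ j)

noncomputable def sel : EuclideanSpace ℝ (Fin n) → EuclideanSpace ℝ (Fin n) :=
  fun y => ∑ i, (pieces σ i).indicator (fun _ => m i) y

lemma pieces_measurable (i : ι) : MeasurableSet (pieces σ i) :=
  (isOpen_interior.measurableSet).diff
    (MeasurableSet.iUnion fun j => MeasurableSet.iUnion fun _ => isOpen_interior.measurableSet)

lemma pieces_disjoint {i j : ι} (hij : i ≠ j) {y : EuclideanSpace ℝ (Fin n)}
    (hi : y ∈ pieces σ i) (hj : y ∈ pieces σ j) : False := by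
  rcases lt_or_gt_of_ne hij with h | h
  · exact hj.2 (Set.mem_iUnion.2 ⟨i, Set.mem_iUnion.2 ⟨h, hi.1⟩⟩)
  · exact hi.2 (Set.mem_iUnion.2 ⟨j, Set.mem_iUnion.2 ⟨h, hj.1⟩⟩)

lemma sel_measurable : Measurable (sel σ m) := by
  apply Finset.measurable_sum
  intro i _
  exact measurable_const.indicator (pieces_measurable σ i)

lemma sel_eq {i : ι} {y : EuclideanSpace ℝ (Fin n)} (hy : y ∈ pieces σ i) :
    sel σ m y = m i := by
  rw [sel, Finset.sum_eq_single i]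
  · simp [Set.indicator_of_mem hy]
  · intro j _ hj
    apply Set.indicator_of_notMem
    intro hyj
    exact pieces_disjoint σ hj.symm hy hyj
  · simp

lemma exists_piece {y : EuclideanSpace ℝ (Fin n)} (hy : ∃ i, y ∈ interior (σ i)) :
    ∃ i, y ∈ pieces σ i := by
  classical
  set s : Finset ι := Finset.univ.filter (fun i => y ∈ interior (σ i)) with hs
  have hne : s.Nonempty := by
    obtain ⟨i, hi⟩ := hy
    exact ⟨i, by simp [hs, hi]⟩
  refine ⟨s.min' hne, ?_, ?_⟩
  · have := s.min'_mem hne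
    simp only [hs, Finset.mem_filter] at this
    exact this.2
  · intro hmem
    simp only [Set.mem_iUnion] at hmem
    obtain ⟨j, hj, hyj⟩ := hmem
    have : s.min' hne ≤ j := s.min'_le j (by simp [hs, hyj])
    exact absurd hj (not_lt.2 this)

lemma sel_norm_le {M : ℝ} (hM : ∀ i, ‖m i‖ ≤ M) (hM0 : 0 ≤ M)
    (y : EuclideanSpace ℝ (Fin n)) : ‖sel σ m y‖ ≤ M := by
  by_cases hy : ∃ i, y ∈ pieces σ i
  · obtain ⟨i, hi⟩ := hy
    rw [sel_eq σ m hi]; exact hM i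
  · push_neg at hy
    have : sel σ m y = 0 := by
      rw [sel]
      apply Finset.sum_eq_zero
      intro i _
      exact Set.indicator_of_notMem (hy i) _
    simp [this, hM0]

lemma ae_exists_piece (hσ_closed : ∀ i, IsClosed (σ i)) (hσ_convex : ∀ i, Convex ℝ (σ i))
    (hσ_cover : (⋃ i, σ i) = Set.univ) :
    ∀ᵐ y : EuclideanSpace ℝ (Fin n) ∂volume, ∃ i, y ∈ pieces σ i := by
  have hnull : volume (⋃ i, frontier (σ i)) = 0 := by
    rw [measure_iUnion_null_iff]
    intro i
    exact (hσ_convex i).addHaar_frontier volume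
  filter_upwards [measure_eq_zero_iff_ae_notMem.mp hnull] with y hy
  apply exists_piece
  have hyc : y ∈ ⋃ i, σ i := by rw [hσ_cover]; trivial
  obtain ⟨s, ⟨i, rfl⟩, hmem⟩ := hyc
  refine ⟨i, ?_⟩
  have : y ∉ frontier (σ i) := fun h => hy (Set.mem_iUnion.2 ⟨i, h⟩)
  rw [(hσ_closed i).frontier_eq] at this
  simp only [Set.mem_diff, not_and, not_not] at this
  exact this hmem
end sel

section moll
variable {n : ℕ} {η : EuclideanSpace ℝ (Fin n) → ℝ} {ε : ℝ}

lemma molle_nonneg (hη_nonneg : ∀ x, 0 ≤ η x) (hε : 0 < ε)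
    (u : EuclideanSpace ℝ (Fin n)) : 0 ≤ (ε ^ n)⁻¹ * η (ε⁻¹ • u) :=
  mul_nonneg (inv_nonneg.2 (pow_nonneg hε.le n)) (hη_nonneg _)

lemma molle_supp (hη_supp : tsupport η ⊆ Metric.closedBall 0 1) (hε : 0 < ε)
    {u : EuclideanSpace ℝ (Fin n)} (hu : (ε ^ n)⁻¹ * η (ε⁻¹ • u) ≠ 0) :
    ‖u‖ ≤ ε := by
  have h1 : η (ε⁻¹ • u) ≠ 0 := fun h => hu (by simp [h])
  have h2 : ε⁻¹ • u ∈ tsupport η := subset_closure (Function.mem_support.2 h1)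
  have := hη_supp h2
  rw [Metric.mem_closedBall, dist_zero_right, norm_smul, norm_inv, Real.norm_eq_abs,
    abs_of_pos hε] at this
  calc ‖u‖ = ε * (ε⁻¹ * ‖u‖) := by field_simp
    _ ≤ ε * 1 := by nlinarith [norm_nonneg u, hε]
    _ = ε := mul_one ε

lemma molle_hcs (hη_supp : tsupport η ⊆ Metric.closedBall 0 1) (hε : 0 < ε) :
    HasCompactSupport fun u : EuclideanSpace ℝ (Fin n) => (ε ^ n)⁻¹ * η (ε⁻¹ • u) := by
  apply HasCompactSupport.intro (isCompact_closedBall (0 : EuclideanSpace ℝ (Fin n)) ε)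
  intro u hu
  by_contra h
  exact hu (by
    rw [Metric.mem_closedBall, dist_zero_right]
    exact molle_supp hη_supp hε h)

lemma molle_cont (hη_cont : Continuous η) :
    Continuous fun u : EuclideanSpace ℝ (Fin n) => (ε ^ n)⁻¹ * η (ε⁻¹ • u) :=
  continuous_const.mul (hη_cont.comp (continuous_const_smul ε⁻¹))

lemma molle_integrable (hη_cont : Continuous η)
    (hη_supp : tsupport η ⊆ Metric.closedBall 0 1) (hε : 0 < ε) :
    Integrable (fun u : EuclideanSpace ℝ (Fin n) => (ε ^ n)⁻¹ * η (ε⁻¹ • u)) volume :=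
  (molle_cont hη_cont).integrable_of_hasCompactSupport (molle_hcs hη_supp hε)

lemma molle_int (hη_int : ∫ x, η x ∂volume = 1) (hε : 0 < ε) :
    ∫ u : EuclideanSpace ℝ (Fin n), (ε ^ n)⁻¹ * η (ε⁻¹ • u) ∂volume = 1 := by
  rw [integral_const_mul, integral_comp_inv_smul_of_nonneg volume η hε.le,
    finrank_euclideanSpace_fin, hη_int, smul_eq_mul]
  field_simp
end moll

section core
variable {n : ℕ} {ι : Type*} [Fintype ι] [Nonempty ι] [LinearOrder ι]

lemma core_deriv
    (σ : ι → Set (EuclideanSpace ℝ (Fin n)))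
    (hσ_closed : ∀ i, IsClosed (σ i)) (hσ_convex : ∀ i, Convex ℝ (σ i))
    (hσ_cover : (⋃ i, σ i) = Set.univ)
    (m : ι → EuclideanSpace ℝ (Fin n))
    (φ : EuclideanSpace ℝ (Fin n) → ℝ) (hφ_cont : Continuous φ)
    (hφ : ∀ i, ∀ x ∈ σ i, φ x = ⟪m i, x⟫)
    (η : EuclideanSpace ℝ (Fin n) → ℝ)
    (hη_cont : Continuous η) (hη_nonneg : ∀ x, 0 ≤ η x)
    (hη_supp : tsupport η ⊆ Metric.closedBall 0 1)
    (hη_int : ∫ x, η x ∂volume = 1)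
    {ε : ℝ} (hε : 0 < ε)
    (x : EuclideanSpace ℝ (Fin n))
    (A : Set ι) (hA : ∀ i u, ‖u‖ ≤ ε → x - u ∈ σ i → i ∈ A) :
    HasFDerivAt (fun y => ∫ u, ((ε ^ n)⁻¹ * η (ε⁻¹ • u)) * φ (y - u) ∂volume)
        (innerSL ℝ (∫ u, ((ε ^ n)⁻¹ * η (ε⁻¹ • u)) • sel σ m (x - u) ∂volume)) x ∧
      (∫ u, ((ε ^ n)⁻¹ * η (ε⁻¹ • u)) • sel σ m (x - u) ∂volume) ∈ convexHull ℝ (m '' A) ∧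
      |(∫ u, ((ε ^ n)⁻¹ * η (ε⁻¹ • u)) * φ (x - u) ∂volume) -
        ⟪(∫ u, ((ε ^ n)⁻¹ * η (ε⁻¹ • u)) • sel σ m (x - u) ∂volume), x⟫| ≤
        ε * ∑ i, ‖m i‖ := by
  set ηε : EuclideanSpace ℝ (Fin n) → ℝ := fun u => (ε ^ n)⁻¹ * η (ε⁻¹ • u) with hηε
  set M : ℝ := ∑ i, ‖m i‖ with hMdef
  have hM : ∀ i, ‖m i‖ ≤ M :=
    fun i => Finset.single_le_sum (fun j _ => norm_nonneg (m j)) (Finset.mem_univ i)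
  have hM0 : 0 ≤ M := le_trans (norm_nonneg _) (hM (Classical.arbitrary ι))
  have hlip : ∀ y z : EuclideanSpace ℝ (Fin n), |φ z - φ y| ≤ M * ‖z - y‖ :=
    pw_lipschitz σ hσ_closed hσ_convex hσ_cover m φ hφ_cont hφ hM
  have hsel_ae : ∀ᵐ u : EuclideanSpace ℝ (Fin n) ∂volume, ∃ i, x - u ∈ pieces σ i := by
    have h0 := ae_exists_piece σ hσ_closed hσ_convex hσ_cover
    have hmp : MeasurePreserving (fun u : EuclideanSpace ℝ (Fin n) => x - u) volume volume :=
      measurePreserving_sub_left volume x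
    rw [← hmp.map_eq] at h0
    exact ae_of_ae_map hmp.measurable.aemeasurable h0
  set w : EuclideanSpace ℝ (Fin n) → EuclideanSpace ℝ (Fin n) :=
    fun u => ηε u • sel σ m (x - u) with hwdef
  have hηε_cont : Continuous ηε := molle_cont hη_cont
  have hηε_int : Integrable ηε volume := molle_integrable hη_cont hη_supp hε
  have hηε_nonneg : ∀ u, 0 ≤ ηε u := molle_nonneg hη_nonneg hε
  have hw_m : Measurable w := by
    apply Measurable.smul hηε_cont.measurable
    exact (sel_measurable σ m).comp (measurable_const.sub measurable_id)
  have hwnorm : ∀ u, ‖w u‖ ≤ M * ηε u := by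
    intro u
    rw [hwdef]
    simp only
    rw [norm_smul, Real.norm_eq_abs, abs_of_nonneg (hηε_nonneg u)]
    calc ηε u * ‖sel σ m (x - u)‖ ≤ ηε u * M :=
          mul_le_mul_of_nonneg_left (sel_norm_le σ m hM hM0 _) (hηε_nonneg u)
      _ = M * ηε u := mul_comm _ _
  have hw_int : Integrable w volume := by
    apply Integrable.mono' (hηε_int.const_mul M) hw_m.aestronglyMeasurable
    exact ae_of_all _ hwnorm
  set d : EuclideanSpace ℝ (Fin n) := ∫ u, w u ∂volume with hddef
  have hFcont : ∀ y : EuclideanSpace ℝ (Fin n),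
      Continuous fun u : EuclideanSpace ℝ (Fin n) => ηε u * φ (y - u) := by
    intro y
    apply hηε_cont.mul
    exact hφ_cont.comp ((continuous_const (y := y)).sub continuous_id)
  have key : HasFDerivAt (fun y => ∫ u, ηε u * φ (y - u) ∂volume)
      (∫ u, (innerSL ℝ) (w u) ∂volume) x := by
    refine (hasFDerivAt_integral_of_dominated_loc_of_lip (μ := volume)
      (F := fun y u => ηε u * φ (y - u)) (F' := fun u => (innerSL ℝ) (w u)) (x₀ := x)
      (bound := fun u => M * ηε u) (s := Set.univ) Filter.univ_mem ?_ ?_ ?_ ?_ ?_ ?_).2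
    · exact Filter.Eventually.of_forall fun y => (hFcont y).aestronglyMeasurable
    · exact (hFcont x).integrable_of_hasCompactSupport (molle_hcs hη_supp hε).mul_right
    · exact ((innerSL ℝ).continuous.measurable.comp hw_m).aestronglyMeasurable
    · apply ae_of_all
      intro u
      apply LipschitzWith.lipschitzOnWith
      apply LipschitzWith.of_dist_le_mul
      intro y z
      have h1 : dist (ηε u * φ (y - u)) (ηε u * φ (z - u)) = |ηε u| * |φ (y - u) - φ (z - u)| := by
        rw [Real.dist_eq, ← abs_mul]
        ring_nf
      rw [h1]
      have h2 : |φ (y - u) - φ (z - u)| ≤ M * ‖y - z‖ := by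
        have := hlip (z - u) (y - u)
        rwa [sub_sub_sub_cancel_right] at this
      have h3 : ((Real.nnabs (M * ηε u)) : ℝ) = M * ηε u := by
        rw [Real.coe_nnabs, abs_mul, abs_of_nonneg hM0, abs_of_nonneg (hηε_nonneg u)]
      rw [dist_eq_norm, h3]
      calc |ηε u| * |φ (y - u) - φ (z - u)| ≤ |ηε u| * (M * ‖y - z‖) :=
            mul_le_mul_of_nonneg_left h2 (abs_nonneg _)
        _ = M * ηε u * ‖y - z‖ := by rw [abs_of_nonneg (hηε_nonneg u)]; ring
    · exact hηε_int.const_mul M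
    · filter_upwards [hsel_ae] with u hu
      obtain ⟨i, hi⟩ := hu
      have hwu : w u = ηε u • m i := by
        rw [hwdef]
        simp only
        rw [sel_eq σ m hi]
      have h1 : HasFDerivAt φ (innerSL ℝ (m i)) (x - u) := by
        have hopen : interior (σ i) ∈ nhds (x - u) := isOpen_interior.mem_nhds hi.1
        have heq : (fun z => (⟪m i, z⟫ : ℝ)) =ᶠ[nhds (x - u)] φ := by
          filter_upwards [hopen] with z hz
          exact (hφ i z (interior_subset hz)).symm
        exact HasFDerivAt.congr_of_eventuallyEq ((innerSL ℝ (m i)).hasFDerivAt) heq.symm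
      have h2 : HasFDerivAt (fun y : EuclideanSpace ℝ (Fin n) => φ (y - u))
          (innerSL ℝ (m i)) x := by
        have h3 := h1.comp x ((hasFDerivAt_id x).sub_const u)
        exact h3
      have h4 := h2.const_mul (ηε u)
      have h5 : (innerSL ℝ) (w u) = ηε u • innerSL ℝ (m i) := by
        rw [hwu, _root_.map_smul]
      rw [h5]
      exact h4
  have hD : (∫ u, (innerSL ℝ) (w u) ∂volume) = innerSL ℝ d :=
    ContinuousLinearMap.integral_comp_comm (innerSL ℝ) hw_int
  rw [hD] at key
  refine ⟨key, ?_, ?_⟩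
  · have f_meas : Measurable fun u : EuclideanSpace ℝ (Fin n) => (ηε u).toNNReal :=
      hηε_cont.measurable.real_toNNReal
    have f_meas' : Measurable fun u : EuclideanSpace ℝ (Fin n) => ((ηε u).toNNReal : ℝ≥0∞) :=
      f_meas.coe_nnreal_ennreal
    set μ' : Measure (EuclideanSpace ℝ (Fin n)) :=
      volume.withDensity (fun u => ((ηε u).toNNReal : ℝ≥0∞)) with hμ'
    have hsmul_eq : ∀ u : EuclideanSpace ℝ (Fin n),
        (ηε u).toNNReal • sel σ m (x - u) = w u := by
      intro u
      rw [hwdef]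
      simp only
      rw [NNReal.smul_def, Real.coe_toNNReal _ (hηε_nonneg u)]
    have hprob : IsProbabilityMeasure μ' := by
      constructor
      rw [hμ', withDensity_apply _ MeasurableSet.univ, setLIntegral_univ]
      have h1 : ∀ u : EuclideanSpace ℝ (Fin n),
          ((ηε u).toNNReal : ℝ≥0∞) = ENNReal.ofReal (ηε u) := fun u => rfl
      simp_rw [h1]
      rw [← ofReal_integral_eq_lintegral_ofReal hηε_int (ae_of_all _ hηε_nonneg),
        molle_int hη_int hε, ENNReal.ofReal_one]
    have hd_eq : d = ∫ u, sel σ m (x - u) ∂μ' := by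
      rw [hμ', integral_withDensity_eq_integral_smul f_meas, hddef]
      exact (congrArg _ (funext fun u => (hsmul_eq u))).symm
    rw [hd_eq]
    apply Convex.integral_mem (convex_convexHull ℝ _)
      ((Set.toFinite _).isClosed_convexHull ℝ)
    · rw [hμ', ae_withDensity_iff f_meas']
      filter_upwards [hsel_ae] with u hu hne
      have hηu : ηε u ≠ 0 := by
        intro h0
        apply hne
        simp [h0]
      have hnu : ‖u‖ ≤ ε := molle_supp hη_supp hε hηu
      obtain ⟨i, hi⟩ := hu
      rw [sel_eq σ m hi]
      exact subset_convexHull ℝ _ ⟨i, hA i u hnu (interior_subset hi.1), rfl⟩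
    · rw [hμ', integrable_withDensity_iff_integrable_smul f_meas]
      have heq : (fun u => (ηε u).toNNReal • sel σ m (x - u)) = w := funext hsmul_eq
      rw [heq]
      exact hw_int
  · have hφx_int : Integrable (fun u => ηε u * φ (x - u)) volume :=
      (hFcont x).integrable_of_hasCompactSupport (molle_hcs hη_supp hε).mul_right
    have hinner_int : Integrable (fun u => (⟪x, w u⟫ : ℝ)) volume :=
      ContinuousLinearMap.integrable_comp (innerSL ℝ x) hw_int
    have hdx : (⟪d, x⟫ : ℝ) = ∫ u, (⟪x, w u⟫ : ℝ) ∂volume := by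
      rw [real_inner_comm, hddef, integral_inner hw_int x]
    rw [hdx, ← integral_sub hφx_int hinner_int]
    have hbd : ∀ᵐ u : EuclideanSpace ℝ (Fin n) ∂volume,
        ‖ηε u * φ (x - u) - ⟪x, w u⟫‖ ≤ (ε * M) * ηε u := by
      filter_upwards [hsel_ae] with u hu
      by_cases h0 : ηε u = 0
      · simp [hwdef, h0]
      · obtain ⟨i, hi⟩ := hu
        have hnu : ‖u‖ ≤ ε := molle_supp hη_supp hε h0
        have hwu : w u = ηε u • m i := by
          rw [hwdef]
          simp only
          rw [sel_eq σ m hi]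
        rw [hwu, hφ i _ (interior_subset hi.1), real_inner_smul_right]
        have hsplit : ηε u * ⟪m i, x - u⟫ - ηε u * ⟪x, m i⟫ = -(ηε u * ⟪m i, u⟫) := by
          rw [inner_sub_right, real_inner_comm x (m i)]
          ring
        rw [hsplit, Real.norm_eq_abs, abs_neg, abs_mul, abs_of_nonneg (hηε_nonneg u)]
        have h1 : |(⟪m i, u⟫ : ℝ)| ≤ M * ε := by
          calc |(⟪m i, u⟫ : ℝ)| ≤ ‖m i‖ * ‖u‖ := abs_real_inner_le_norm _ _
            _ ≤ M * ε := mul_le_mul (hM i) hnu (norm_nonneg _) hM0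
        calc ηε u * |(⟪m i, u⟫ : ℝ)| ≤ ηε u * (M * ε) :=
              mul_le_mul_of_nonneg_left h1 (hηε_nonneg u)
          _ = (ε * M) * ηε u := by ring
    calc abs (∫ u, (ηε u * φ (x - u) - ⟪x, w u⟫) ∂volume)
        ≤ ∫ u, (ε * M) * ηε u ∂volume := by
          rw [← Real.norm_eq_abs]
          exact norm_integral_le_of_norm_le (hηε_int.const_mul (ε * M)) hbd
      _ = (ε * M) * ∫ u, ηε u ∂volume := integral_const_mul _ _
      _ = ε * M := by rw [molle_int hη_int hε, mul_one]
end core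


lemma clm_identity {n : ℕ} (ξ d : EuclideanSpace ℝ (Fin n)) (hξ : ξ ≠ 0) (f : ℝ) :
    (‖ξ‖ • ((innerSL ℝ d).comp
        (‖ξ‖⁻¹ • ContinuousLinearMap.id ℝ (EuclideanSpace ℝ (Fin n)) +
          ((-(‖ξ‖ ^ 2)⁻¹) • innerSL ℝ (‖ξ‖⁻¹ • ξ)).smulRight ξ)) +
        f • innerSL ℝ (‖ξ‖⁻¹ • ξ)) =
      (InnerProductSpace.toDual ℝ (EuclideanSpace ℝ (Fin n)))
        (d + (f - ⟪d, ‖ξ‖⁻¹ • ξ⟫) • (‖ξ‖⁻¹ • ξ)) := by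
  have hξn : ‖ξ‖ ≠ 0 := norm_ne_zero_iff.2 hξ
  ext v
  simp only [ContinuousLinearMap.add_apply, ContinuousLinearMap.smul_apply,
    ContinuousLinearMap.comp_apply, ContinuousLinearMap.smulRight_apply,
    ContinuousLinearMap.id_apply, innerSL_apply_apply, InnerProductSpace.toDual_apply_apply,
    smul_eq_mul, inner_add_left, inner_add_right, real_inner_smul_left, real_inner_smul_right]
  generalize (⟪d, v⟫ : ℝ) = a
  generalize (⟪ξ, v⟫ : ℝ) = b
  generalize (⟪d, ξ⟫ : ℝ) = e
  field_simp
  ring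

/-- Proposition 4.1 of the paper: for every `ξ ≠ 0` and all sufficiently small `ε > 0`,
the gradient of the homogenized smoothing `φ_ε` at `ξ` lies within `ε · Σ_i ‖m i‖` of the
convex hull of the Cartier data `{m i : ξ ∈ σ i}` of the cones containing `ξ`. -/
theorem gradient_homogenized_smoothing_near_convex_hull
    (n : ℕ) (hn : 1 ≤ n)
    (ι : Type*) [Fintype ι] [Nonempty ι]
    (σ : ι → Set (EuclideanSpace ℝ (Fin n)))
    (hσ_closed : ∀ i, IsClosed (σ i))
    (hσ_convex : ∀ i, Convex ℝ (σ i))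
    (hσ_cone : ∀ i, ∀ t : ℝ, 0 ≤ t → ∀ x ∈ σ i, t • x ∈ σ i)
    (hσ_cover : (⋃ i, σ i) = Set.univ)
    (m : ι → EuclideanSpace ℝ (Fin n))
    (φ : EuclideanSpace ℝ (Fin n) → ℝ)
    (hφ_cont : Continuous φ)
    (hφ : ∀ i, ∀ x ∈ σ i, φ x = ⟪m i, x⟫)
    (η : EuclideanSpace ℝ (Fin n) → ℝ)
    (hη_smooth : ContDiff ℝ (⊤ : ℕ∞) η) (hη_nonneg : ∀ x, 0 ≤ η x)
    (hη_supp : tsupport η ⊆ Metric.closedBall 0 1)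
    (hη_int : ∫ x, η x ∂volume = 1)
    (fε : ℝ → EuclideanSpace ℝ (Fin n) → ℝ)
    (hfε : ∀ ε x, fε ε x = ∫ u, ((ε ^ n)⁻¹ * η (ε⁻¹ • u)) * φ (x - u) ∂volume)
    (φε : ℝ → EuclideanSpace ℝ (Fin n) → ℝ)
    (hφε : ∀ ε ξ, φε ε ξ = ‖ξ‖ * fε ε (‖ξ‖⁻¹ • ξ))
    (ξ : EuclideanSpace ℝ (Fin n)) (hξ : ξ ≠ 0) :
    ∃ ε₀ > (0 : ℝ), ∀ ε : ℝ, 0 < ε → ε < ε₀ →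
      Metric.infDist (gradient (φε ε) ξ) (convexHull ℝ (m '' {i | ξ ∈ σ i})) ≤
        ε * ∑ i, ‖m i‖ := by
  classical
  letI : LinearOrder ι := LinearOrder.lift' (Fintype.equivFin ι) (Fintype.equivFin ι).injective
  have hξn : ‖ξ‖ ≠ 0 := norm_ne_zero_iff.2 hξ
  have hξpos : 0 < ‖ξ‖ := norm_pos_iff.2 hξ
  set x : EuclideanSpace ℝ (Fin n) := ‖ξ‖⁻¹ • ξ with hxdef
  have hxnorm : ‖x‖ = 1 := norm_smul_inv_norm hξ
  have hxσ : ∀ i, x ∈ σ i → ξ ∈ σ i := by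
    intro i hx
    have := hσ_cone i ‖ξ‖ (norm_nonneg ξ) x hx
    rwa [hxdef, smul_inv_smul₀ hξn] at this
  have hσx : ∀ i, ξ ∈ σ i → x ∈ σ i := fun i hx => hσ_cone i ‖ξ‖⁻¹ (by positivity) ξ hx
  set A : Set ι := {i | ξ ∈ σ i} with hAdef
  set r : ι → ℝ := fun i => if x ∈ σ i ∨ ¬(σ i).Nonempty then 1 else Metric.infDist x (σ i)
    with hrdef
  have hrpos : ∀ i, 0 < r i := by
    intro i
    by_cases h : x ∈ σ i ∨ ¬(σ i).Nonempty
    · simp [hrdef, h]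
    · have hri : r i = Metric.infDist x (σ i) := by rw [hrdef]; exact if_neg h
      push_neg at h
      rw [hri]
      exact (IsClosed.notMem_iff_infDist_pos (hσ_closed i) h.2).1 h.1
  set ε₀ : ℝ := min 1 (Finset.univ.inf' Finset.univ_nonempty r) with hε₀def
  have hε₀pos : 0 < ε₀ :=
    lt_min one_pos ((Finset.lt_inf'_iff _).2 fun i _ => hrpos i)
  refine ⟨ε₀, hε₀pos, ?_⟩
  intro ε hε hεlt
  have hA : ∀ i u, ‖u‖ ≤ ε → x - u ∈ σ i → i ∈ A := by
    intro i u hu hmem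
    by_contra hnot
    have hξnot : ξ ∉ σ i := hnot
    have hxnot : x ∉ σ i := fun h => hξnot (hxσ i h)
    have hne : (σ i).Nonempty := ⟨x - u, hmem⟩
    have hri : r i = Metric.infDist x (σ i) := by
      rw [hrdef]
      exact if_neg (by rw [not_or, not_not]; exact ⟨hxnot, hne⟩)
    have hle : Metric.infDist x (σ i) ≤ dist x (x - u) := Metric.infDist_le_dist_of_mem hmem
    have hdxu : dist x (x - u) = ‖u‖ := by
      rw [dist_eq_norm]
      simp
    have h1 : r i ≤ ε := by
      rw [hri]
      calc Metric.infDist x (σ i) ≤ dist x (x - u) := hle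
        _ = ‖u‖ := hdxu
        _ ≤ ε := hu
    have h2 : ε₀ ≤ r i :=
      le_trans (min_le_right _ _) (Finset.inf'_le _ (Finset.mem_univ i))
    linarith
  obtain ⟨hder, hmem, hbnd⟩ := core_deriv σ hσ_closed hσ_convex hσ_cover m φ hφ_cont hφ η
    hη_smooth.continuous hη_nonneg hη_supp hη_int hε x A hA
  set d : EuclideanSpace ℝ (Fin n) :=
    ∫ u, ((ε ^ n)⁻¹ * η (ε⁻¹ • u)) • sel σ m (x - u) ∂volume with hddef
  have hfεfun : fε ε = fun y => ∫ u, ((ε ^ n)⁻¹ * η (ε⁻¹ • u)) * φ (y - u) ∂volume :=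
    funext (hfε ε)
  have hderf : HasFDerivAt (fε ε) (innerSL ℝ d) x := by rw [hfεfun]; exact hder
  -- derivative of the norm
  have hinner : HasFDerivAt (fun y : EuclideanSpace ℝ (Fin n) => (⟪y, y⟫ : ℝ))
      ((fderivInnerCLM ℝ (ξ, ξ)).comp
        ((ContinuousLinearMap.id ℝ (EuclideanSpace ℝ (Fin n))).prod
          (ContinuousLinearMap.id ℝ (EuclideanSpace ℝ (Fin n))))) ξ :=
    (hasFDerivAt_id ξ).inner ℝ (hasFDerivAt_id ξ)
  have hips : (⟪ξ, ξ⟫ : ℝ) ≠ 0 := by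
    rw [real_inner_self_eq_norm_mul_norm]
    positivity
  have hsqrt := HasDerivAt.comp_hasFDerivAt
    (f := fun y : EuclideanSpace ℝ (Fin n) => (⟪y, y⟫ : ℝ)) ξ (Real.hasDerivAt_sqrt hips) hinner
  have hnormfun : (fun y : EuclideanSpace ℝ (Fin n) => Real.sqrt (⟪y, y⟫ : ℝ)) =
      fun y : EuclideanSpace ℝ (Fin n) => ‖y‖ := by
    funext y
    rw [real_inner_self_eq_norm_mul_norm, Real.sqrt_mul_self (norm_nonneg y)]
  have hnorm : HasFDerivAt (fun y : EuclideanSpace ℝ (Fin n) => ‖y‖) (innerSL ℝ x) ξ := by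
    have heq : ((1 : ℝ) / (2 * Real.sqrt (⟪ξ, ξ⟫ : ℝ))) •
        ((fderivInnerCLM ℝ (ξ, ξ)).comp
          ((ContinuousLinearMap.id ℝ (EuclideanSpace ℝ (Fin n))).prod
            (ContinuousLinearMap.id ℝ (EuclideanSpace ℝ (Fin n))))) = innerSL ℝ x := by
      ext v
      have hs : Real.sqrt (⟪ξ, ξ⟫ : ℝ) = ‖ξ‖ := by
        rw [real_inner_self_eq_norm_mul_norm, Real.sqrt_mul_self (norm_nonneg ξ)]
      simp only [ContinuousLinearMap.smul_apply, ContinuousLinearMap.comp_apply,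
        ContinuousLinearMap.prod_apply, ContinuousLinearMap.id_apply, fderivInnerCLM_apply,
        innerSL_apply_apply, hs, smul_eq_mul, hxdef, real_inner_smul_left]
      rw [real_inner_comm v ξ]
      field_simp
      ring
    rw [← hnormfun, ← heq]
    exact hsqrt
  have hinv : HasFDerivAt (fun y : EuclideanSpace ℝ (Fin n) => ‖y‖⁻¹)
      ((-(‖ξ‖ ^ 2)⁻¹) • innerSL ℝ x) ξ :=
    (hasDerivAt_inv hξn).comp_hasFDerivAt ξ hnorm
  have hr : HasFDerivAt (fun y : EuclideanSpace ℝ (Fin n) => ‖y‖⁻¹ • y)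
      (‖ξ‖⁻¹ • ContinuousLinearMap.id ℝ (EuclideanSpace ℝ (Fin n)) +
        ((-(‖ξ‖ ^ 2)⁻¹) • innerSL ℝ x).smulRight ξ) ξ :=
    hinv.smul (hasFDerivAt_id ξ)
  have hcomp : HasFDerivAt (fun y : EuclideanSpace ℝ (Fin n) => fε ε (‖y‖⁻¹ • y))
      ((innerSL ℝ d).comp
        (‖ξ‖⁻¹ • ContinuousLinearMap.id ℝ (EuclideanSpace ℝ (Fin n)) +
          ((-(‖ξ‖ ^ 2)⁻¹) • innerSL ℝ x).smulRight ξ)) ξ :=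
    HasFDerivAt.comp ξ hderf hr
  have hmul := hnorm.mul hcomp
  have hφεfun : φε ε = fun y : EuclideanSpace ℝ (Fin n) => ‖y‖ * fε ε (‖y‖⁻¹ • y) :=
    funext (hφε ε)
  set c : ℝ := fε ε x - ⟪d, x⟫ with hcdef
  set G : EuclideanSpace ℝ (Fin n) := d + c • x with hGdef
  have hL : HasFDerivAt (φε ε) ((InnerProductSpace.toDual ℝ (EuclideanSpace ℝ (Fin n))) G) ξ := by
    rw [hφεfun, hGdef, hcdef, hxdef]
    rw [← clm_identity ξ d hξ (fε ε (‖ξ‖⁻¹ • ξ))]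
    exact hmul
  have hgrad : gradient (φε ε) ξ = G :=
    HasGradientAt.gradient (hasGradientAt_iff_hasFDerivAt.mpr hL)
  rw [hgrad]
  calc Metric.infDist G (convexHull ℝ (m '' A))
      ≤ dist G d := Metric.infDist_le_dist_of_mem hmem
    _ = ‖c • x‖ := by rw [hGdef, dist_eq_norm, add_sub_cancel_left]
    _ = |c| := by rw [norm_smul, Real.norm_eq_abs, hxnorm, mul_one]
    _ ≤ ε * ∑ i, ‖m i‖ := by
        rw [hcdef, hfε ε x]
        exact hbnd
end
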